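/- arXiv:math/0601633 — 8 statements merged into one kernel-verified Lean document; each statement's English description precedes it below -/
import Mathlib

section
/- Let G be a finite abelian group with |G| ≥ 2. Then the minimum of |D(C)| over all Hamiltonian cycles C on G equals rk(G), the minimal number of generators of G. -/
/-- A Hamiltonian cycle on a finite type `G` is a permutation of `G` which is a single
cycle whose support is all of `G`. -/
def IsHamCycle {G : Type*} [Fintype G] [DecidableEq G] (σ : Equiv.Perm G) : Prop :=
  σ.IsCycle ∧ σ.support = Finset.univ

/-- The set `D(C)` of differences of consecutive elements along the Hamiltonian cycle
given by the permutation `σ`. -/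
def cycleDiffs {G : Type*} [AddCommGroup G] [Fintype G] [DecidableEq G]
    (σ : Equiv.Perm G) : Finset G :=
  Finset.image (fun g => σ g - g) Finset.univ

/-- The set `S(C)` of sums of consecutive elements along the Hamiltonian cycle
given by the permutation `σ`. -/
def cycleSums {G : Type*} [AddCommGroup G] [Fintype G] [DecidableEq G]
    (σ : Equiv.Perm G) : Finset G :=
  Finset.image (fun g => g + σ g) Finset.univ

/-- The rank of an additive abelian group: the minimal cardinality of a generating set. -/
noncomputable def addRank (G : Type*) [AddCommGroup G] : ℕ :=
  sInf {n : ℕ | ∃ S : Finset G, S.card = n ∧ AddSubgroup.closure (S : Set G) = ⊤}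

/-- The addition Cayley graph `Cay⁺(G,S)`: distinct vertices `g, h` are adjacent
iff `g + h ∈ S`. -/
def addCayley (G : Type*) [AddCommGroup G] (S : Set G) : SimpleGraph G where
  Adj g h := g ≠ h ∧ g + h ∈ S
  symm := by
    constructor
    intro g h hgh
    exact ⟨hgh.1.symm, by rw [add_comm]; exact hgh.2⟩
  loopless := by
    constructor
    intro g hg
    exact hg.1 rfl

/-- The subgroup `2G = {g + g : g ∈ G}` of `G`. -/
def twoSubgroup (G : Type*) [AddCommGroup G] : AddSubgroup G :=
  (AddMonoidHom.id G + AddMonoidHom.id G).range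

set_option linter.unusedSectionVars false
section ConjPerm
variable {α β : Type*}

def conjPerm (e : α ≃ β) : Equiv.Perm α →* Equiv.Perm β where
  toFun p := (e.symm.trans p).trans e
  map_one' := by ext x; simp
  map_mul' p q := by ext x; simp [Equiv.Perm.mul_apply]

@[simp] lemma conjPerm_apply (e : α ≃ β) (p : Equiv.Perm α) (x : β) :
    conjPerm e p x = e (p (e.symm x)) := rfl

lemma conjPerm_isCycle (e : α ≃ β) {p : Equiv.Perm α} (hp : p.IsCycle) :
    (conjPerm e p).IsCycle := by
  obtain ⟨x, hx, hall⟩ := hp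
  refine ⟨e x, by simpa using fun h => hx (e.injective h), ?_⟩
  intro y hy
  have hy' : p (e.symm y) ≠ e.symm y := by
    intro h
    apply hy
    simp [h]
  obtain ⟨i, hi⟩ := hall hy'
  refine ⟨i, ?_⟩
  have h2 : (conjPerm e) p ^ i = (conjPerm e) (p ^ i) := (map_zpow (conjPerm e) p i).symm
  rw [h2, conjPerm_apply, Equiv.symm_apply_apply, hi, Equiv.apply_symm_apply]

end ConjPerm

section Lower

variable {G : Type*} [AddCommGroup G] [Fintype G] [DecidableEq G]

lemma cycleDiffs_gen {σ : Equiv.Perm G} (h : IsHamCycle σ) :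
    AddSubgroup.closure ((cycleDiffs σ : Finset G) : Set G) = ⊤ := by
  set N := AddSubgroup.closure ((cycleDiffs σ : Finset G) : Set G) with hN
  have hmem : ∀ x : G, σ x - x ∈ N := by
    intro x
    exact AddSubgroup.subset_closure (by simp [cycleDiffs])
  have key : ∀ k : ℕ, (σ ^ k) 0 ∈ N := by
    intro k
    induction k with
    | zero => simpa using N.zero_mem
    | succ k ih =>
      rw [pow_succ', Equiv.Perm.mul_apply]
      have : σ ((σ ^ k) 0) = (σ ((σ ^ k) 0) - (σ ^ k) 0) + (σ ^ k) 0 := by abel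
      rw [this]
      exact N.add_mem (hmem _) ih
  rw [AddSubgroup.eq_top_iff']
  intro y
  have h0 : σ 0 ≠ 0 := Equiv.Perm.mem_support.mp (h.2 ▸ Finset.mem_univ 0)
  have hy : σ y ≠ y := Equiv.Perm.mem_support.mp (h.2 ▸ Finset.mem_univ y)
  obtain ⟨k, hk⟩ := h.1.exists_pow_eq h0 hy
  exact hk ▸ key k

lemma addRank_le_of_ham {σ : Equiv.Perm G} (h : IsHamCycle σ) :
    addRank G ≤ (cycleDiffs σ).card :=
  Nat.sInf_le ⟨cycleDiffs σ, rfl, cycleDiffs_gen h⟩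

lemma addRank_exists (G : Type*) [AddCommGroup G] [Fintype G] [DecidableEq G] :
    ∃ S : Finset G, S.card = addRank G ∧ AddSubgroup.closure (S : Set G) = ⊤ :=
  Nat.sInf_mem (⟨Fintype.card G, Finset.univ, by simp, by simp⟩ :
    Set.Nonempty {n : ℕ | ∃ S : Finset G, S.card = n ∧ AddSubgroup.closure (S : Set G) = ⊤})

lemma addRank_pos (hG : 2 ≤ Fintype.card G) : 1 ≤ addRank G := by
  by_contra hcon
  obtain ⟨S, hcard, hgen⟩ := addRank_exists G
  have hS0 : S = ∅ := Finset.card_eq_zero.mp (by omega)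
  rw [hS0] at hgen
  simp only [Finset.coe_empty, AddSubgroup.closure_empty] at hgen
  have : Nontrivial G := Fintype.one_lt_card_iff_nontrivial.mp (by omega)
  obtain ⟨x, hx⟩ := exists_ne (0 : G)
  have : x ∈ (⊥ : AddSubgroup G) := hgen ▸ AddSubgroup.mem_top x
  exact hx (AddSubgroup.mem_bot.mp this)

end Lower

section Cyclic

variable {G : Type*} [AddCommGroup G] [Fintype G] [DecidableEq G]

lemma addRight_pow (s : G) (k : ℕ) (x : G) : ((Equiv.addRight s) ^ k) x = x + k • s := by
  induction k with
  | zero => simp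
  | succ k ih =>
    rw [pow_succ', Equiv.Perm.mul_apply, ih]
    rw [succ_nsmul]
    simp [Equiv.addRight]
    abel

lemma cyclic_ham (hG : 2 ≤ Fintype.card G) {s : G}
    (hs : AddSubgroup.closure ({s} : Set G) = ⊤) :
    ∃ σ : Equiv.Perm G, IsHamCycle σ ∧ cycleDiffs σ = {s} := by
  have hs0 : s ≠ 0 := by
    rintro rfl
    rw [AddSubgroup.closure_singleton_zero] at hs
    have : Nontrivial G := Fintype.one_lt_card_iff_nontrivial.mp (by omega)
    obtain ⟨x, hx⟩ := exists_ne (0 : G)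
    have : x ∈ (⊥ : AddSubgroup G) := hs ▸ AddSubgroup.mem_top x
    exact hx (AddSubgroup.mem_bot.mp this)
  have hreach : ∀ y : G, ∃ k : ℕ, k • s = y := by
    intro y
    have : y ∈ AddSubgroup.closure ({s} : Set G) := hs ▸ AddSubgroup.mem_top y
    obtain ⟨m, hm⟩ := AddSubgroup.mem_closure_singleton.mp this
    set c : ℕ := Fintype.card G with hc
    have hcne : (c:ℤ) ≠ 0 := by
      have : 0 < c := by omega
      exact_mod_cast this.ne'
    refine ⟨(m % (c:ℤ)).toNat, ?_⟩
    have h1 : ((m % (c:ℤ)).toNat : ℤ) = m % (c:ℤ) := Int.toNat_of_nonneg (Int.emod_nonneg m hcne)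
    have hcs : (c:ℤ) • s = 0 := by
      rw [natCast_zsmul]; exact card_nsmul_eq_zero
    have h3 : (m % (c:ℤ)) • s = m • s := by
      conv_rhs => rw [← Int.emod_add_mul_ediv m (c:ℤ)]
      rw [add_zsmul, mul_comm, mul_zsmul, hcs, smul_zero, add_zero]
    rw [← natCast_zsmul, h1, h3, hm]
  refine ⟨Equiv.addRight s, ⟨⟨0, by simpa using hs0, ?_⟩, ?_⟩, ?_⟩
  · intro y _
    obtain ⟨k, hk⟩ := hreach y
    exact ⟨(k : ℤ), by rw [zpow_natCast, addRight_pow, zero_add, hk]⟩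
  · rw [Finset.eq_univ_iff_forall]
    intro x
    rw [Equiv.Perm.mem_support]
    simpa using hs0
  · rw [cycleDiffs]
    rw [Finset.eq_singleton_iff_nonempty_unique_mem]
    constructor
    · exact ⟨s, Finset.mem_image.mpr ⟨0, Finset.mem_univ _, by simp⟩⟩
    · intro x hx
      obtain ⟨g, _, hg⟩ := Finset.mem_image.mp hx
      rw [← hg]
      simp [Equiv.addRight]

end Cyclic
section Main

universe u

lemma exists_good_ham : ∀ (n : ℕ) (G : Type u) [AddCommGroup G] [Fintype G] [DecidableEq G],
    Fintype.card G = n → 2 ≤ Fintype.card G →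
    ∃ σ : Equiv.Perm G, IsHamCycle σ ∧ (cycleDiffs σ).card ≤ addRank G := by
  intro n
  induction n using Nat.strong_induction_on with
  | _ n ih =>
  intro G _ _ _ hcard hG
  obtain ⟨S, hScard, hSgen⟩ := addRank_exists G
  have hr1 : 1 ≤ addRank G := addRank_pos hG
  obtain ⟨s, hs⟩ := Finset.card_pos.mp (by omega : 0 < S.card)
  set T : Finset G := S.erase s with hT
  have hTcard : T.card = addRank G - 1 := by
    rw [hT, Finset.card_erase_of_mem hs, hScard]
  set H : AddSubgroup G := AddSubgroup.closure (T : Set G) with hH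
  letI : Fintype ↥H := Fintype.ofFinite ↥H
  by_cases hHtop : H = ⊤
  · exfalso
    have : addRank G ≤ T.card := Nat.sInf_le ⟨T, rfl, hHtop⟩
    omega
  by_cases hH1 : Fintype.card ↥H ≤ 1
  · -- H is trivial, so G is cyclic generated by s
    have hsgen : AddSubgroup.closure ({s} : Set G) = ⊤ := by
      apply top_unique
      rw [← hSgen, AddSubgroup.closure_le]
      intro t ht
      by_cases hts : t = s
      · exact hts ▸ AddSubgroup.subset_closure rfl
      · have htH : t ∈ H := AddSubgroup.subset_closure (Finset.mem_coe.mpr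
          (Finset.mem_erase.mpr ⟨hts, ht⟩))
        have : Subsingleton ↥H := Fintype.card_le_one_iff_subsingleton.mp hH1
        have h0 : (⟨t, htH⟩ : ↥H) = ⟨0, H.zero_mem⟩ := Subsingleton.elim _ _
        have ht0 : t = 0 := congrArg Subtype.val h0
        rw [ht0]
        exact (AddSubgroup.closure ({s} : Set G)).zero_mem
    obtain ⟨σ, hham, hdiff⟩ := cyclic_ham hG hsgen
    exact ⟨σ, hham, by rw [hdiff]; simpa using hr1⟩
  · -- main case
    push_neg at hH1
    have hHcard : 2 ≤ Fintype.card ↥H := hH1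
    letI : Fintype (G ⧸ H) := Fintype.ofFinite _
    have hqgen : ∀ x : G, ∃ m : ℤ, x - m • s ∈ H := by
      intro x
      let K : AddSubgroup G :=
        { carrier := {x | ∃ m : ℤ, x - m • s ∈ H}
          zero_mem' := ⟨0, by simpa using H.zero_mem⟩
          add_mem' := by
            rintro a b ⟨m, hm⟩ ⟨m', hm'⟩
            refine ⟨m + m', ?_⟩
            have heq : a + b - (m + m') • s = (a - m • s) + (b - m' • s) := by
              rw [add_zsmul]; abel
            rw [heq]
            exact H.add_mem hm hm'
          neg_mem' := by
            rintro a ⟨m, hm⟩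
            refine ⟨-m, ?_⟩
            have heq : -a - (-m) • s = -(a - m • s) := by rw [neg_zsmul]; abel
            rw [heq]
            exact H.neg_mem hm }
      have hSK : (S : Set G) ⊆ (K : Set G) := by
        intro t ht
        show ∃ m : ℤ, t - m • s ∈ H
        by_cases hts : t = s
        · refine ⟨1, ?_⟩
          rw [hts, one_zsmul, sub_self]
          exact H.zero_mem
        · refine ⟨0, ?_⟩
          rw [zero_zsmul, sub_zero]
          exact AddSubgroup.subset_closure (Finset.mem_coe.mpr (Finset.mem_erase.mpr ⟨hts, ht⟩))
      have hle : (⊤ : AddSubgroup G) ≤ K := hSgen ▸ (AddSubgroup.closure_le K).mpr hSK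
      have hxK : x ∈ K := hle (AddSubgroup.mem_top x)
      exact hxK
    have hquot : ∀ q : G ⧸ H, q ∈ AddSubgroup.zmultiples ((QuotientAddGroup.mk s : G ⧸ H)) := by
      intro q
      induction q using QuotientAddGroup.induction_on with
      | H x =>
        obtain ⟨m, hm⟩ := hqgen x
        refine ⟨m, ?_⟩
        have heq : ((QuotientAddGroup.mk' H) (m • s) : G ⧸ H) = (QuotientAddGroup.mk' H) x := by
          rw [QuotientAddGroup.mk'_eq_mk']
          exact ⟨x - m • s, hm, by abel⟩
        simpa [map_zsmul] using heq
    set nn : ℕ := addOrderOf ((QuotientAddGroup.mk s : G ⧸ H)) with hnn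
    have hncard : nn = Fintype.card (G ⧸ H) := by
      have hc := addOrderOf_eq_card_of_forall_mem_zmultiples hquot
      rwa [Nat.card_eq_fintype_card] at hc
    have hQnontriv : Nontrivial (G ⧸ H) := by
      obtain ⟨x, hx⟩ : ∃ x : G, x ∉ H := by
        by_contra hcon
        push_neg at hcon
        exact hHtop ((AddSubgroup.eq_top_iff' H).mpr hcon)
      exact ⟨(QuotientAddGroup.mk x : G ⧸ H), 0,
        fun h => hx ((QuotientAddGroup.eq_zero_iff x).mp h)⟩
    have hn2 : 2 ≤ nn := by
      rw [hncard]
      exact Fintype.one_lt_card_iff_nontrivial.mpr hQnontriv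
    haveI : NeZero nn := ⟨by omega⟩
    have hGcard : Fintype.card G = nn * Fintype.card ↥H := by
      have hc := AddSubgroup.card_eq_card_quotient_mul_card_addSubgroup H
      rw [Nat.card_eq_fintype_card, Nat.card_eq_fintype_card, Nat.card_eq_fintype_card] at hc
      rw [hc, hncard]
    have hinj : Function.Injective
        (fun p : ZMod nn × ↥H => (p.1.val) • s + (p.2 : G)) := by
      rintro ⟨k, h⟩ ⟨k', h'⟩ heq
      simp only at heq
      have hmemH : k.val • s - k'.val • s ∈ H := by
        have heq2 : k.val • s - k'.val • s = (h' : G) - (h : G) := by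
          calc k.val • s - k'.val • s
              = (k.val • s + (h : G)) - (h : G) - k'.val • s := by abel
            _ = (k'.val • s + (h' : G)) - (h : G) - k'.val • s := by rw [heq]
            _ = (h' : G) - (h : G) := by abel
        rw [heq2]
        exact H.sub_mem h'.2 h.2
      have hq : (k.val : ℕ) • (QuotientAddGroup.mk s : G ⧸ H) =
          (k'.val : ℕ) • (QuotientAddGroup.mk s : G ⧸ H) := by
        have heq3 : ((QuotientAddGroup.mk' H) (k.val • s) : G ⧸ H) =
            (QuotientAddGroup.mk' H) (k'.val • s) := by
          rw [QuotientAddGroup.mk'_eq_mk']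
          refine ⟨k'.val • s - k.val • s, ?_, by abel⟩
          have h5 := H.neg_mem hmemH
          rwa [neg_sub] at h5
        simpa [map_nsmul] using heq3
      have hkk : k.val = k'.val := by
        apply nsmul_injOn_Iio_addOrderOf (x := (QuotientAddGroup.mk s : G ⧸ H))
        · exact Set.mem_Iio.mpr (hnn ▸ ZMod.val_lt k)
        · exact Set.mem_Iio.mpr (hnn ▸ ZMod.val_lt k')
        · exact hq
      have hk : k = k' := by
        have hc := congrArg (fun v : ℕ => (v : ZMod nn)) hkk
        simpa [ZMod.natCast_val, ZMod.cast_id] using hc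
      refine Prod.ext hk (Subtype.ext ?_)
      rw [hkk] at heq
      exact add_left_cancel heq
    have hbij : Function.Bijective
        (fun p : ZMod nn × ↥H => (p.1.val) • s + (p.2 : G)) := by
      rw [Fintype.bijective_iff_injective_and_card]
      refine ⟨hinj, ?_⟩
      rw [Fintype.card_prod, ZMod.card, ← hGcard]
    set e : (ZMod nn × ↥H) ≃ G := Equiv.ofBijective _ hbij with he
    have heval : ∀ (k : ZMod nn) (h : ↥H), e (k, h) = k.val • s + (h : G) := fun _ _ => rfl
    have hHlt : Fintype.card ↥H < n := by
      rw [← hcard, hGcard]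
      nlinarith
    obtain ⟨ρ, hρham, hρcard⟩ := ih (Fintype.card ↥H) hHlt ↥H rfl hHcard
    have hmove : ∀ h : ↥H, ρ h ≠ h := fun h =>
      Equiv.Perm.mem_support.mp (hρham.2 ▸ Finset.mem_univ h)
    have hrankH : addRank ↥H ≤ addRank G - 1 := by
      classical
      set T' : Finset ↥H := T.attach.map
        ⟨fun t => (⟨t.1, AddSubgroup.subset_closure t.2⟩ : ↥H),
         by rintro ⟨a, ha⟩ ⟨b, hb⟩ hab; simpa using congrArg Subtype.val hab⟩ with hT'
      have hT'card : T'.card = addRank G - 1 := by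
        rw [hT', Finset.card_map, Finset.card_attach, hTcard]
      have hT'gen : AddSubgroup.closure ((T' : Finset ↥H) : Set ↥H) = ⊤ := by
        have hset : ((T' : Finset ↥H) : Set ↥H) = ((↑) : ↥H → G) ⁻¹' (T : Set G) := by
          ext x
          constructor
          · intro hx
            rw [Finset.mem_coe, hT', Finset.mem_map] at hx
            obtain ⟨a, -, rfl⟩ := hx
            exact Finset.mem_coe.mpr a.2
          · intro hx
            rw [Finset.mem_coe, hT', Finset.mem_map]
            exact ⟨⟨(x : G), hx⟩, Finset.mem_attach _ _, Subtype.ext rfl⟩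
        rw [hset]
        exact AddSubgroup.closure_closure_coe_preimage
      exact hT'card ▸ Nat.sInf_le ⟨T', rfl, hT'gen⟩
    -- the permutation τ' on ZMod nn × H
    set τ' : Equiv.Perm (ZMod nn × ↥H) :=
      { toFun := fun p => (p.1 + 1, if p.1 = -1 then ρ p.2 else p.2)
        invFun := fun p => (p.1 - 1, if p.1 = 0 then ρ.symm p.2 else p.2)
        left_inv := by
          rintro ⟨k, h⟩
          by_cases hk : k = -1
          · simp [hk]
          · have hk1 : k + 1 ≠ 0 := fun hcon => hk (eq_neg_of_add_eq_zero_left hcon)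
            simp [hk, hk1]
        right_inv := by
          rintro ⟨k, h⟩
          by_cases hk : k = 0
          · simp [hk]
          · have hk1 : k - 1 ≠ -1 := fun hcon => hk (by
              have h2 := congrArg (· + 1) hcon
              simpa using h2)
            simp [hk, hk1] } with hτ'
    have hτ'app : ∀ (k : ZMod nn) (h : ↥H),
        τ' (k, h) = (k + 1, if k = -1 then ρ h else h) := fun _ _ => rfl
    haveI : Fact (1 < nn) := ⟨by omega⟩
    have hone : (1 : ZMod nn) ≠ 0 := one_ne_zero
    have hpow : ∀ (m : ℕ) (h : ↥H), (τ' ^ m) (0, h) = ((m : ZMod nn), (ρ ^ (m / nn)) h) := by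
      intro m h
      induction m with
      | zero => simp [Nat.zero_div]
      | succ m ihm =>
        rw [pow_succ', Equiv.Perm.mul_apply, ihm, hτ'app]
        by_cases hd : nn ∣ m + 1
        · have hm1 : ((m + 1 : ℕ) : ZMod nn) = 0 := (ZMod.natCast_eq_zero_iff _ _).mpr hd
          have hmeq : (m : ZMod nn) = -1 := by
            push_cast at hm1
            exact eq_neg_of_add_eq_zero_left hm1
          have hdiv : (m + 1) / nn = m / nn + 1 := by
            rw [Nat.succ_div, if_pos hd]
          rw [if_pos hmeq, hdiv]
          refine Prod.ext ?_ ?_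
          · push_cast
            rfl
          · simp only
            rw [pow_succ', Equiv.Perm.mul_apply]
        · have hm1 : ((m + 1 : ℕ) : ZMod nn) ≠ 0 := fun hcon =>
            hd ((ZMod.natCast_eq_zero_iff _ _).mp hcon)
          have hmeq : (m : ZMod nn) ≠ -1 := fun hcon => hm1 (by push_cast; rw [hcon]; simp)
          have hdiv : (m + 1) / nn = m / nn := by
            rw [Nat.succ_div, if_neg hd, add_zero]
          rw [if_neg hmeq, hdiv]
          refine Prod.ext ?_ rfl
          push_cast
          rfl
    have hτ'move : ∀ p : ZMod nn × ↥H, τ' p ≠ p := by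
      rintro ⟨k, h⟩ hcon
      have h1 : k + 1 = k := congrArg Prod.fst hcon
      exact hone (add_left_cancel (show k + 1 = k + 0 by rw [add_zero, h1]))
    have hτ'cycle : τ'.IsCycle := by
      refine ⟨(0, 0), hτ'move _, ?_⟩
      rintro ⟨k, h'⟩ -
      obtain ⟨j, hj⟩ := hρham.1.exists_pow_eq (hmove 0) (hmove h')
      refine ⟨((nn * j + k.val : ℕ) : ℤ), ?_⟩
      rw [zpow_natCast, hpow]
      have h1 : ((nn * j + k.val : ℕ) : ZMod nn) = k := by
        push_cast
        simp [ZMod.natCast_self, ZMod.natCast_val, ZMod.cast_id]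
      have h2 : (nn * j + k.val) / nn = j := by
        rw [Nat.mul_add_div (by omega : 0 < nn), Nat.div_eq_of_lt (ZMod.val_lt k), add_zero]
      rw [h1, h2, hj]
    set τ : Equiv.Perm G := conjPerm e τ' with hτdef
    have hτham : IsHamCycle τ := by
      refine ⟨conjPerm_isCycle e hτ'cycle, ?_⟩
      rw [Finset.eq_univ_iff_forall]
      intro x
      rw [Equiv.Perm.mem_support]
      intro hcon
      rw [hτdef] at hcon
      have hcon2 : τ' (e.symm x) = e.symm x := by
        have h3 := congrArg e.symm hcon
        simpa using h3
      exact hτ'move _ hcon2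
    -- the value lemma for val of successor
    have hval : ∀ k : ZMod nn, k ≠ -1 → (k + 1).val = k.val + 1 := by
      intro k hk
      have hlt : k.val + 1 < nn := by
        have h1 : k.val < nn := ZMod.val_lt k
        rcases Nat.lt_or_ge (k.val + 1) nn with hcase | hcase
        · exact hcase
        · exfalso
          have hkv : k.val = nn - 1 := by omega
          apply hk
          have hrep : k = ((k.val : ℕ) : ZMod nn) := by
            simp [ZMod.natCast_val, ZMod.cast_id]
          rw [hrep, hkv]
          have hsum : ((nn - 1 : ℕ) : ZMod nn) + 1 = ((nn : ℕ) : ZMod nn) := by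
            have : ((nn - 1 : ℕ) : ZMod nn) + ((1 : ℕ) : ZMod nn) = ((nn - 1 + 1 : ℕ) : ZMod nn) := by
              push_cast
              ring
            rw [show ((1:ℕ) : ZMod nn) = 1 by push_cast; rfl] at this
            rw [this]
            congr 1
            omega
          rw [ZMod.natCast_self] at hsum
          exact eq_neg_of_add_eq_zero_left hsum
      calc (k + 1).val = (((k.val + 1 : ℕ)) : ZMod nn).val := by
            congr 1
            push_cast
            simp [ZMod.natCast_val, ZMod.cast_id]
        _ = k.val + 1 := ZMod.val_cast_of_lt hlt
    -- bounding the difference set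
    have hsub : cycleDiffs τ ⊆ insert s ((cycleDiffs ρ).image
        (fun d : ↥H => (d : G) - (-1 : ZMod nn).val • s)) := by
      intro x hx
      obtain ⟨g, -, rfl⟩ := Finset.mem_image.mp hx
      show τ g - g ∈ _
      rcases hkh : e.symm g with ⟨k, h⟩
      have hg2 : g = e (k, h) := by rw [← hkh, Equiv.apply_symm_apply]
      by_cases hk : k = -1
      · have hτg : τ g = ((ρ h : ↥H) : G) := by
          rw [hτdef, conjPerm_apply, hkh, hτ'app, if_pos hk, hk, neg_add_cancel, heval]
          simp [ZMod.val_zero]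
        have hX : τ g - g = ((ρ h : ↥H) : G) - (h : G) - (-1 : ZMod nn).val • s := by
          rw [hτg, hg2, heval, hk]
          abel
        rw [hX]
        apply Finset.mem_insert_of_mem
        apply Finset.mem_image.mpr
        refine ⟨ρ h - h, Finset.mem_image_of_mem _ (Finset.mem_univ h), ?_⟩
        push_cast
        abel
      · have hτg : τ g = (k + 1).val • s + (h : G) := by
          rw [hτdef, conjPerm_apply, hkh, hτ'app, if_neg hk, heval]
        have hX : τ g - g = s := by
          rw [hτg, hg2, heval, hval k hk, succ_nsmul]
          abel
        rw [hX]
        exact Finset.mem_insert_self _ _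
    have hbound : (cycleDiffs τ).card ≤ addRank G := by
      have h1 := Finset.card_le_card hsub
      have h2 := Finset.card_insert_le s ((cycleDiffs ρ).image
        (fun d : ↥H => (d : G) - (-1 : ZMod nn).val • s))
      have h3 := Finset.card_image_le (f := fun d : ↥H => (d : G) - (-1 : ZMod nn).val • s)
        (s := cycleDiffs ρ)
      omega
    exact ⟨τ, hτham, hbound⟩

end Main

theorem stmt0 (G : Type*) [AddCommGroup G] [Fintype G] [DecidableEq G]
    (hG : 2 ≤ Fintype.card G) :
    sInf {k : ℕ | ∃ σ : Equiv.Perm G, IsHamCycle σ ∧ (cycleDiffs σ).card = k} = addRank G := by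
  obtain ⟨σ, hham, hbound⟩ := exists_good_ham (Fintype.card G) G rfl hG
  have hlow : ∀ k ∈ {k : ℕ | ∃ σ : Equiv.Perm G, IsHamCycle σ ∧ (cycleDiffs σ).card = k},
      addRank G ≤ k := by
    rintro k ⟨σ', hham', rfl⟩
    exact addRank_le_of_ham hham'
  have heq : (cycleDiffs σ).card = addRank G :=
    le_antisymm hbound (hlow _ ⟨σ, hham, rfl⟩)
  have hmem : addRank G ∈ {k : ℕ | ∃ σ : Equiv.Perm G, IsHamCycle σ ∧ (cycleDiffs σ).card = k} :=
    ⟨σ, hham, heq⟩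
  exact le_antisymm (Nat.sInf_le hmem) (le_csInf ⟨_, hmem⟩ hlow)
end

section
/- Let H be a finite abelian group with |H| ≥ 2, let C be a Hamiltonian cycle on H, and let m ≥ 2 be an integer. Then there exists a Hamiltonian cycle C′ on the group H × (ℤ/mℤ) such that |D(C′)| ≤ |D(C)| + 1. -/
/-!
Lift `C` to the "snake" on `H × ℤ/mℤ`: from `(h, j)` step to `(h, j + 1)`, except that on
leaving the last layer `j = -1` one also moves `h` to its successor on `C`. Starting from
`(h₀, 0)`, after `q m + j` steps one is at `(σ^q h₀, j)`, so every vertex is visited; and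
every difference is `(0, 1)` or `(d, 1)` with `d ∈ D(C)`.
-/

namespace Equiv.Perm

variable {α : Type*} (σ : Perm α) (m : ℕ)

def snake : Perm (α × ZMod m) where
  toFun p := (if p.2 + 1 = 0 then σ p.1 else p.1, p.2 + 1)
  invFun p := (if p.2 = 0 then σ.symm p.1 else p.1, p.2 - 1)
  left_inv := by
    rintro ⟨a, j⟩
    by_cases hj : j + 1 = 0
    · simp [eq_neg_of_add_eq_zero_left hj]
    · simp [hj]
  right_inv := by
    rintro ⟨a, j⟩
    by_cases hj : j = 0 <;> simp [hj]

theorem snake_apply (p : α × ZMod m) :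
    snake σ m p = (if p.2 + 1 = 0 then σ p.1 else p.1, p.2 + 1) := rfl

theorem snake_pow_apply_mk_zero (a : α) (k : ℕ) :
    (snake σ m ^ k) (a, 0) = ((σ ^ (k / m)) a, (k : ZMod m)) := by
  induction k with
  | zero => simp
  | succ k ih =>
    have hwrap : (k : ZMod m) + 1 = 0 ↔ m ∣ k + 1 := by
      rw [← ZMod.natCast_eq_zero_iff]; push_cast; rfl
    rw [pow_succ', mul_apply, ih, snake_apply, Nat.succ_div]
    by_cases hd : m ∣ k + 1
    · simp [hwrap.mpr hd, hd, pow_succ']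
    · simp [hwrap, hd]

variable {σ m}

theorem snake_apply_ne (hσ : ∀ a, σ a ≠ a) (p : α × ZMod m) : snake σ m p ≠ p := by
  intro hp
  by_cases hj : p.2 + 1 = 0
  · have hfst := congrArg Prod.fst hp
    simp only [snake_apply, if_pos hj] at hfst
    exact hσ _ hfst
  · have hsnd := congrArg Prod.snd hp
    simp only [snake_apply, add_eq_left] at hsnd
    -- `1 = 0` in `ZMod m`, so it is the zero ring
    exact hj (by linear_combination (p.2 + 1) * hsnd)

theorem sameCycle_snake_mk_zero [Finite α] [NeZero m] {a b : α} (hσ : SameCycle σ a b)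
    (j : ZMod m) :
    SameCycle (snake σ m) (a, 0) (b, j) := by
  obtain ⟨q, -, rfl⟩ := hσ.exists_nat_pow_eq
  have hdiv : (q * m + j.val) / m = q := by
    rw [Nat.mul_comm, Nat.mul_add_div (NeZero.pos m), Nat.div_eq_of_lt j.val_lt, Nat.add_zero]
  have hcast : ((q * m + j.val : ℕ) : ZMod m) = j := by simp
  have := snake_pow_apply_mk_zero σ m a (q * m + j.val)
  rw [hdiv, hcast] at this
  exact this ▸ sameCycle_pow_right.mpr (SameCycle.refl _ _)

end Equiv.Perm

open Equiv.Perm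

theorem isHamCycle_snake {α : Type*} [Fintype α] [DecidableEq α] {σ : Equiv.Perm α}
    (hσ : IsHamCycle σ) (m : ℕ) [NeZero m] : IsHamCycle (snake σ m) := by
  obtain ⟨hcycle, hsupport⟩ := hσ
  have hσ_ne : ∀ a, σ a ≠ a := fun a => mem_support.mp (hsupport ▸ Finset.mem_univ a)
  obtain ⟨a, -⟩ := hcycle.nonempty_support
  refine ⟨⟨(a, 0), snake_apply_ne hσ_ne _, fun ⟨b, j⟩ _ => ?_⟩,
    Finset.eq_univ_of_forall fun p => mem_support.mpr (snake_apply_ne hσ_ne p)⟩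
  exact sameCycle_snake_mk_zero (hcycle.sameCycle (hσ_ne a) (hσ_ne b)) j

theorem cycleDiffs_snake_subset {H : Type*} [AddCommGroup H] [Fintype H] [DecidableEq H]
    (σ : Equiv.Perm H) (m : ℕ) [NeZero m] :
    cycleDiffs (snake σ m) ⊆ insert (0, 1) ((cycleDiffs σ).image fun d => (d, 1)) := by
  intro x hx
  obtain ⟨⟨h, j⟩, -, rfl⟩ := Finset.mem_image.mp hx
  by_cases hj : j + 1 = 0
  · refine Finset.mem_insert_of_mem (Finset.mem_image.mpr
      ⟨σ h - h, Finset.mem_image_of_mem _ (Finset.mem_univ h), ?_⟩)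
    simp [snake_apply, eq_neg_of_add_eq_zero_left hj]
  · simp [snake_apply, hj]

theorem card_cycleDiffs_snake_le {H : Type*} [AddCommGroup H] [Fintype H] [DecidableEq H]
    (σ : Equiv.Perm H) (m : ℕ) [NeZero m] :
    (cycleDiffs (snake σ m)).card ≤ (cycleDiffs σ).card + 1 :=
  calc (cycleDiffs (snake σ m)).card
      ≤ ((cycleDiffs σ).image fun d => (d, (1 : ZMod m))).card + 1 :=
        (Finset.card_le_card (cycleDiffs_snake_subset σ m)).trans (Finset.card_insert_le _ _)
    _ ≤ (cycleDiffs σ).card + 1 := Nat.add_le_add_right Finset.card_image_le 1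

theorem stmt1_general (H : Type*) [AddCommGroup H] [Fintype H] [DecidableEq H]
    (σ : Equiv.Perm H) (hσ : IsHamCycle σ)
    (m : ℕ) [NeZero m] :
    ∃ σ' : Equiv.Perm (H × ZMod m), IsHamCycle σ' ∧
      (cycleDiffs σ').card ≤ (cycleDiffs σ).card + 1 :=
  ⟨snake σ m, isHamCycle_snake hσ m, card_cycleDiffs_snake_le σ m⟩

theorem stmt1 (H : Type*) [AddCommGroup H] [Fintype H] [DecidableEq H]
    (hH : 2 ≤ Fintype.card H) (σ : Equiv.Perm H) (hσ : IsHamCycle σ)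
    (m : ℕ) [NeZero m] (hm : 2 ≤ m) :
    ∃ σ' : Equiv.Perm (H × ZMod m), IsHamCycle σ' ∧
      (cycleDiffs σ').card ≤ (cycleDiffs σ).card + 1 :=
  stmt1_general H σ hσ m
end

section
/- Let G be a finite abelian group of order n with n ≥ 2, let g be a nonzero element of G, and let A ⊆ G be a subset that contains no coset of the cyclic subgroup ⟨g⟩ generated by g (i.e., for no x ∈ G is x + ⟨g⟩ ⊆ A). Then the number of Hamiltonian cycles σ on G satisfying σ(a) = a + g for every a ∈ A equals (n − |A| − 1)!. -/
section Aux
open Equiv Equiv.Perm Finset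

lemma zmod_pow_apply {α : Type*} (m : ℕ) [NeZero m] (ℓ : ZMod m ≃ α) (k : ℕ) (x : α) :
    ((((ℓ.symm.trans (Equiv.addLeft (1 : ZMod m))).trans ℓ : Perm α))^k) x
      = ℓ ((k : ZMod m) + ℓ.symm x) := by
  induction k with
  | zero => simp
  | succ k ih =>
    rw [pow_succ', Perm.mul_apply, ih]
    simp only [trans_apply, symm_apply_apply, coe_addLeft]
    push_cast
    ring_nf

open scoped Classical in
lemma card_full_cycles (α : Type*) [Fintype α] [DecidableEq α] [Nonempty α] :
    Fintype.card {τ : Perm α // τ.IsCycleOn (Set.univ : Set α)} =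
      Nat.factorial (Fintype.card α - 1) := by
  classical
  set m := Fintype.card α with hm
  have hm1 : 1 ≤ m := Fintype.card_pos
  obtain ⟨t₀⟩ := ‹Nonempty α›
  have hcard_ne : Fintype.card {x : α // x ≠ t₀} = m - 1 := by
    have := Fintype.card_subtype_compl (fun x : α => x = t₀)
    simpa [Fintype.card_subtype_eq, hm] using this
  have key : ∀ (τ : Perm α), τ.IsCycleOn (Set.univ : Set α) → ∀ i j : ℕ,
      ((τ^i) t₀ = (τ^j) t₀ ↔ i ≡ j [MOD m]) := by
    intro τ hτ i j
    have hτ' : τ.IsCycleOn ↑(Finset.univ : Finset α) := by rwa [Finset.coe_univ]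
    rw [hτ'.pow_apply_eq_pow_apply (Finset.mem_univ t₀)]
    simp [Nat.ModEq, hm]
  have exkey : ∀ (τ : Perm α), τ.IsCycleOn (Set.univ : Set α) → ∀ x : α,
      ∃ j < m, (τ^j) t₀ = x := by
    intro τ hτ x
    have hτ' : τ.IsCycleOn ↑(Finset.univ : Finset α) := by rwa [Finset.coe_univ]
    simpa using hτ'.exists_pow_eq (Finset.mem_univ t₀) (Finset.mem_univ x)
  set Φ : {τ : Perm α // τ.IsCycleOn (Set.univ : Set α)} →
      (Fin (m-1) → {x : α // x ≠ t₀}) :=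
    fun τ i => ⟨(τ.1 ^ ((i : ℕ)+1)) t₀, by
      intro h
      have hi := i.2
      have h0 : ((i : ℕ)+1) ≡ 0 [MOD m] := by
        rw [← key τ.1 τ.2 _ 0]; simpa using h
      have hd : m ∣ ((i:ℕ)+1) := (Nat.modEq_zero_iff_dvd).1 h0
      have hle : m ≤ (i:ℕ)+1 := Nat.le_of_dvd (by omega) hd
      omega⟩ with hΦ
  have Φbij : ∀ τ : {τ : Perm α // τ.IsCycleOn (Set.univ : Set α)}, Function.Bijective (Φ τ) := by
    intro τ
    constructor
    · intro i j hij
      have h' : (τ.1 ^ ((i:ℕ)+1)) t₀ = (τ.1 ^ ((j:ℕ)+1)) t₀ := by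
        simpa [hΦ, Subtype.ext_iff] using hij
      have hmod := (key τ.1 τ.2 _ _).1 h'
      have hi := i.2; have hj := j.2
      have : ((i:ℕ)+1) = ((j:ℕ)+1) := Nat.ModEq.eq_of_lt_of_lt hmod (by omega) (by omega)
      exact Fin.ext (by omega)
    · rintro ⟨x, hx⟩
      obtain ⟨j, hj, hjx⟩ := exkey τ.1 τ.2 x
      have hj0 : j ≠ 0 := by rintro rfl; exact hx (by simpa using hjx.symm)
      refine ⟨⟨j - 1, by omega⟩, ?_⟩
      simp only [hΦ, Subtype.ext_iff]
      simpa [Nat.sub_add_cancel (Nat.one_le_iff_ne_zero.2 hj0)] using hjx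
  have Φinj : Function.Injective
      (fun τ : {τ : Perm α // τ.IsCycleOn (Set.univ : Set α)} =>
        (Equiv.ofBijective _ (Φbij τ) : Fin (m-1) ≃ {x : α // x ≠ t₀})) := by
    intro τ σ h
    have hpt : ∀ j < m, (τ.1^j) t₀ = (σ.1^j) t₀ := by
      intro j hjm
      rcases Nat.eq_zero_or_pos j with rfl | hj
      · simp
      · have := congrArg (fun e => ((e : Fin (m-1) ≃ {x : α // x ≠ t₀}) ⟨j-1, by omega⟩ : α)) h
        simpa [Equiv.ofBijective, hΦ, Nat.sub_add_cancel hj] using this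
    have hptm : ∀ j ≤ m, (τ.1^j) t₀ = (σ.1^j) t₀ := by
      intro j hjm
      rcases eq_or_lt_of_le hjm with heq | hj
      · rw [heq, (key τ.1 τ.2 m 0).2 (Nat.modEq_zero_iff_dvd.2 dvd_rfl),
          (key σ.1 σ.2 m 0).2 (Nat.modEq_zero_iff_dvd.2 dvd_rfl)]
        simp
      · exact hpt j hj
    ext x
    obtain ⟨j, hj, rfl⟩ := exkey τ.1 τ.2 x
    calc τ.1 ((τ.1^j) t₀) = (τ.1^(j+1)) t₀ := by rw [pow_succ']; rfl
      _ = (σ.1^(j+1)) t₀ := hptm _ (by omega)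
      _ = σ.1 ((σ.1^j) t₀) := by rw [pow_succ']; rfl
      _ = σ.1 ((τ.1^j) t₀) := by rw [hpt j hj]
  have Φsurj : Function.Surjective
      (fun τ : {τ : Perm α // τ.IsCycleOn (Set.univ : Set α)} =>
        (Equiv.ofBijective _ (Φbij τ) : Fin (m-1) ≃ {x : α // x ≠ t₀})) := by
    intro f
    haveI : NeZero m := ⟨by omega⟩
    have valne : ∀ z : ZMod m, z ≠ 0 → z.val ≠ 0 := by
      intro z hz hv
      exact hz (ZMod.val_injective m (by simpa using hv))
    set L : ZMod m → α := fun z => if h : z = 0 then t₀ else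
      (f ⟨z.val - 1, by have h1 := ZMod.val_lt z; have h0 := valne z h; omega⟩ : α) with hL
    have Lbij : Function.Bijective L := by
      rw [Fintype.bijective_iff_injective_and_card, ZMod.card]
      refine ⟨?_, rfl⟩
      intro z w hzw
      by_cases hz : z = 0 <;> by_cases hw : w = 0
      · rw [hz, hw]
      · exact absurd (by simpa [hL, hz, hw] using hzw.symm) (f _).2
      · exact absurd (by simpa [hL, hz, hw] using hzw) (f _).2
      · simp only [hL, dif_neg hz, dif_neg hw] at hzw
        have := congrArg Fin.val (f.injective (Subtype.ext hzw))
        simp only at this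
        have hz0 := valne z hz; have hw0 := valne w hw
        exact ZMod.val_injective m (by omega)
    set ℓ : ZMod m ≃ α := Equiv.ofBijective L Lbij with hℓ
    have hℓ0 : ℓ 0 = t₀ := by show L 0 = t₀; simp [hL]
    have hℓs : ∀ i : Fin (m-1), ℓ ((((i:ℕ)+1 : ℕ)) : ZMod m) = f i := by
      intro i
      have hi := i.2
      have hlt : (i : ℕ) + 1 < m := by omega
      have hval : (((i:ℕ)+1 : ℕ) : ZMod m).val = (i:ℕ)+1 := ZMod.val_cast_of_lt hlt
      have hne : ((((i:ℕ)+1 : ℕ)) : ZMod m) ≠ 0 := by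
        intro h0
        rw [h0, ZMod.val_zero] at hval
        omega
      show L _ = _
      rw [hL]
      simp only [dif_neg hne]
      have harg : ((((i:ℕ)+1 : ℕ) : ZMod m).val - 1) = (i:ℕ) := by rw [hval]; omega
      exact congrArg (fun j => (f j : α)) (Fin.ext harg)
    set τ : Perm α := (ℓ.symm.trans (Equiv.addLeft (1 : ZMod m))).trans ℓ with hτdef
    have hpow : ∀ (k : ℕ) (x : α), (τ^k) x = ℓ ((k : ZMod m) + ℓ.symm x) :=
      zmod_pow_apply m ℓ
    have hτc : τ.IsCycleOn (Set.univ : Set α) := by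
      constructor
      · exact τ.bijective.bijOn_univ
      · intro x _ y _
        refine ⟨((ℓ.symm y - ℓ.symm x).val : ℤ), ?_⟩
        rw [zpow_natCast, hpow]
        rw [ZMod.natCast_val, ZMod.cast_id, sub_add_cancel, Equiv.apply_symm_apply]
    refine ⟨⟨τ, hτc⟩, ?_⟩
    ext i
    show ((Φ ⟨τ, hτc⟩ i : {x : α // x ≠ t₀}) : α) = (f i : α)
    simp only [hΦ]
    have h0 : ℓ.symm t₀ = 0 := by rw [← hℓ0, Equiv.symm_apply_apply]
    rw [hpow, h0, add_zero, hℓs]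
  have hcc : Fintype.card {τ : Perm α // τ.IsCycleOn (Set.univ : Set α)} =
      Fintype.card (Fin (m-1) ≃ {x : α // x ≠ t₀}) :=
    Fintype.card_of_bijective (f := fun τ => (Equiv.ofBijective _ (Φbij τ) : Fin (m-1) ≃ {x : α // x ≠ t₀})) ⟨Φinj, Φsurj⟩
  rw [hcc, Fintype.card_equiv (Fintype.equivOfCardEq (by simp [hcard_ne])), Fintype.card_fin]

section Main
variable {G : Type*} [AddCommGroup G] [Fintype G] [DecidableEq G]

-- zsmul congruence
lemma zsmul_congr_mod (g : G) {m m' : ℤ} (h : ((addOrderOf g : ℤ)) ∣ (m - m')) :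
    m • g = m' • g := by
  have h0 : (m - m') • g = 0 := by
    obtain ⟨q, hq⟩ := h
    rw [hq, mul_comm, mul_zsmul, natCast_zsmul, addOrderOf_nsmul_eq_zero, smul_zero]
  calc m • g = (m - m') • g + m' • g := by rw [← add_zsmul]; ring_nf
    _ = m' • g := by rw [h0, zero_add]

lemma exists_nat_smul_eq (g : G) (m : ℤ) : ∃ k : ℕ, (k : ℤ) • g = m • g := by
  have hd : 0 < addOrderOf g := addOrderOf_pos g
  set d : ℤ := (addOrderOf g : ℤ) with hdd
  have hd' : (0:ℤ) < d := by rw [hdd]; exact_mod_cast hd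
  refine ⟨(m % d).toNat, zsmul_congr_mod g ?_⟩
  rw [Int.toNat_of_nonneg (Int.emod_nonneg m hd'.ne')]
  exact ⟨-(m/d), by rw [Int.emod_def]; ring⟩

lemma exists_neg_nat_smul_eq (g : G) (m : ℤ) : ∃ j : ℕ, (-(j+1) : ℤ) • g = m • g := by
  have hd : 0 < addOrderOf g := addOrderOf_pos g
  set d : ℤ := (addOrderOf g : ℤ) with hdd
  have hd' : (0:ℤ) < d := by rw [hdd]; exact_mod_cast hd
  refine ⟨((-m-1) % d).toNat, zsmul_congr_mod g ?_⟩
  rw [Int.toNat_of_nonneg (Int.emod_nonneg _ hd'.ne')]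
  refine ⟨(-m-1)/d, ?_⟩
  rw [Int.emod_def]
  ring

end Main

section Paths
variable {G : Type*} [AddCommGroup G] [DecidableEq G] {g : G} {A : Finset G}
variable (hc : ∀ x : G, ∃ k : ℕ, x + k • g ∉ A)
variable (hc' : ∀ t : G, ∃ j : ℕ, t - (j+1) • g ∉ A)

/-- number of forced steps from `x` to leave `A`. -/
def kkf (x : G) : ℕ := Nat.find (hc x)

/-- endpoint of the forced path starting at `x`. -/
def ef (x : G) : G := x + (kkf hc x) • g

/-- number of backward steps from `t` to the start of its path. -/
def jjf (t : G) : ℕ := Nat.find (hc' t)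

/-- start (head) of the forced path ending at `t`. -/
def hstartf (t : G) : G := t - (jjf hc' t) • g

lemma ef_not_mem (x : G) : ef hc x ∉ A := Nat.find_spec (hc x)

lemma kkf_mem {x : G} {i : ℕ} (hi : i < kkf hc x) : x + i • g ∈ A := by
  have := Nat.find_min (hc x) hi
  simpa using this

lemma kkf_eq_zero {x : G} (hx : x ∉ A) : kkf hc x = 0 :=
  Nat.eq_zero_of_le_zero (Nat.find_le (by simpa using hx))

lemma ef_eq_self {x : G} (hx : x ∉ A) : ef hc x = x := by
  rw [ef, kkf_eq_zero hc hx, zero_smul, add_zero]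

lemma kkf_succ {x : G} (hx : x ∈ A) : kkf hc x = kkf hc (x + g) + 1 := by
  have harith : ∀ k : ℕ, x + (k+1) • g = (x + g) + k • g := by
    intro k; rw [add_nsmul, one_nsmul]; abel
  apply le_antisymm
  · apply Nat.find_le
    rw [harith]
    exact Nat.find_spec (hc (x+g))
  · have h1 : 1 ≤ kkf hc x := by
      rw [Nat.one_le_iff_ne_zero]
      intro h0
      have := Nat.find_spec (hc x)
      rw [kkf] at h0
      rw [h0] at this
      simp at this
      exact this hx
    have h2 : kkf hc (x + g) ≤ kkf hc x - 1 := by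
      apply Nat.find_le
      have := Nat.find_spec (hc x)
      rw [← harith, Nat.sub_add_cancel h1]
      exact this
    omega

lemma ef_add_g {x : G} (hx : x ∈ A) : ef hc (x + g) = ef hc x := by
  rw [ef, ef, kkf_succ hc hx, add_nsmul, one_nsmul]
  abel

lemma hstartf_sub_g_not_mem (t : G) : hstartf hc' t - g ∉ A := by
  have := Nat.find_spec (hc' t)
  rw [hstartf]
  have : t - (jjf hc' t) • g - g = t - (jjf hc' t + 1) • g := by
    rw [add_nsmul, one_nsmul]; abel
  rw [this]
  exact Nat.find_spec (hc' t)

lemma jjf_mem {t : G} {i : ℕ} (hi : i < jjf hc' t) : t - (i+1) • g ∈ A := by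
  have := Nat.find_min (hc' t) hi
  simpa using this

lemma ef_hstartf {t : G} (ht : t ∉ A) : ef hc (hstartf hc' t) = t := by
  suffices h : ∀ i : ℕ, i ≤ jjf hc' t → ef hc (t - i • g) = t by
    exact h _ le_rfl
  intro i
  induction i with
  | zero => intro _; rw [zero_smul, sub_zero]; exact ef_eq_self hc ht
  | succ i ih =>
    intro hle
    have hmem : t - (i+1) • g ∈ A := jjf_mem hc' (by omega)
    have harith : t - (i+1) • g + g = t - i • g := by
      rw [add_nsmul, one_nsmul]; abel
    have h2 := ef_add_g hc hmem
    rw [harith] at h2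
    rw [← h2]
    exact ih (by omega)

lemma jjf_ef {x : G} (hx : x - g ∉ A) : jjf hc' (ef hc x) = kkf hc x := by
  set k := kkf hc x with hk
  apply le_antisymm
  · apply Nat.find_le
    have : ef hc x - (k+1) • g = x - g := by
      rw [ef, ← hk, add_nsmul, one_nsmul]; abel
    rw [this]
    exact hx
  · by_contra hlt
    push_neg at hlt
    have hspec := Nat.find_spec (hc' (ef hc x))
    set j := jjf hc' (ef hc x) with hj
    have hmem : ef hc x - (j+1) • g ∈ A := by
      have harith : ef hc x - (j+1) • g = x + (k - (j+1)) • g := by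
        rw [ef, ← hk]
        have hkk : (k - (j+1)) + (j+1) = k := by omega
        calc x + k • g - (j+1) • g = x + ((k - (j+1)) + (j+1)) • g - (j+1) • g := by rw [hkk]
          _ = x + (k - (j+1)) • g := by rw [add_nsmul]; abel
      rw [harith]
      exact kkf_mem hc (by omega)
    exact hspec hmem

lemma hstartf_ef {x : G} (hx : x - g ∉ A) : hstartf hc' (ef hc x) = x := by
  rw [hstartf, jjf_ef hc hc' hx, ef]
  abel

section WithFintype
variable [Fintype G]

/-- the permutation of `G` built from a permutation of the complement of `A`. -/
noncomputable def sigmaOf (τ : Perm {x : G // x ∉ A}) : Perm G :=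
  Equiv.ofBijective (fun x => if h : x ∈ A then x + g else hstartf hc' ((τ ⟨x, h⟩ : {x : G // x ∉ A}) : G))
  (by
    rw [Fintype.bijective_iff_injective_and_card]
    refine ⟨?_, rfl⟩
    intro x y hxy
    dsimp only at hxy
    by_cases hx : x ∈ A <;> by_cases hy : y ∈ A
    · rw [dif_pos hx, dif_pos hy] at hxy
      exact add_right_cancel hxy
    · rw [dif_pos hx, dif_neg hy] at hxy
      exfalso
      apply hstartf_sub_g_not_mem hc' ((τ ⟨y, hy⟩ : {x : G // x ∉ A}) : G)
      rw [← hxy]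
      simpa using hx
    · rw [dif_neg hx, dif_pos hy] at hxy
      exfalso
      apply hstartf_sub_g_not_mem hc' ((τ ⟨x, hx⟩ : {x : G // x ∉ A}) : G)
      rw [hxy]
      simpa using hy
    · rw [dif_neg hx, dif_neg hy] at hxy
      have h1 : ((τ ⟨x, hx⟩ : {x : G // x ∉ A}) : G) = ((τ ⟨y, hy⟩ : {x : G // x ∉ A}) : G) := by
        rw [← ef_hstartf hc hc' (τ ⟨x, hx⟩).2, ← ef_hstartf hc hc' (τ ⟨y, hy⟩).2, hxy]
      have := τ.injective (Subtype.ext h1)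
      simpa using this)

lemma sigmaOf_mem (τ : Perm {x : G // x ∉ A}) {x : G} (hx : x ∈ A) :
    sigmaOf hc hc' τ x = x + g := by
  simp only [sigmaOf, Equiv.ofBijective_apply, dif_pos hx]

lemma sigmaOf_not_mem (τ : Perm {x : G // x ∉ A}) {x : G} (hx : x ∉ A) :
    sigmaOf hc hc' τ x = hstartf hc' ((τ ⟨x, hx⟩ : {x : G // x ∉ A}) : G) := by
  simp only [sigmaOf, Equiv.ofBijective_apply, dif_neg hx]

lemma pow_forced (σ : Perm G) (hσ : ∀ a ∈ A, σ a = a + g) (x : G) :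
    (σ ^ (kkf hc x)) x = ef hc x := by
  suffices h : ∀ j : ℕ, j ≤ kkf hc x → (σ ^ j) x = x + j • g by
    exact h _ le_rfl
  intro j
  induction j with
  | zero => intro _; simp
  | succ j ih =>
    intro hle
    rw [pow_succ', Perm.mul_apply, ih (by omega), hσ _ (kkf_mem hc (by omega)),
      add_nsmul, one_nsmul, add_assoc]

/-- the permutation of the complement of `A` induced by a Hamiltonian cycle. -/
noncomputable def tauOf (σ : Perm G) (hσf : ∀ a ∈ A, σ a = a + g) :
    Perm {x : G // x ∉ A} :=
  Equiv.ofBijective (fun t => ⟨ef hc (σ (t : G)), ef_not_mem hc _⟩) (by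
    rw [Fintype.bijective_iff_injective_and_card]
    refine ⟨?_, rfl⟩
    have head : ∀ t : {x : G // x ∉ A}, σ (t:G) - g ∉ A := by
      intro t hmem
      have h1 : σ ((σ (t:G)) - g) = σ (t:G) := by rw [hσf _ hmem]; abel
      have h2 : (σ (t:G)) - g = (t : G) := σ.injective h1
      rw [h2] at hmem
      exact t.2 hmem
    intro t t' h
    have h0 : ef hc (σ (t:G)) = ef hc (σ (t':G)) := congrArg Subtype.val h
    have h1 : σ (t:G) = σ (t':G) := by
      rw [← hstartf_ef hc hc' (head t), ← hstartf_ef hc hc' (head t'), h0]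
    exact Subtype.ext (σ.injective h1))

lemma tauOf_apply (σ : Perm G) (hσf : ∀ a ∈ A, σ a = a + g) (t : {x : G // x ∉ A}) :
    ((tauOf hc hc' σ hσf t : {x : G // x ∉ A}) : G) = ef hc (σ (t : G)) := rfl

lemma tauOf_isCycleOn (σ : Perm G) (hσf : ∀ a ∈ A, σ a = a + g)
    (hσc : σ.IsCycle) (hσs : σ.support = Finset.univ) :
    (tauOf hc hc' σ hσf).IsCycleOn Set.univ := by
  set τ := tauOf hc hc' σ hσf with hτ
  have hGcyc : ∀ x y : G, ∃ m : ℕ, (σ^m) x = y := by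
    have h1 : σ.IsCycleOn {x | σ x ≠ x} := hσc.isCycleOn
    have h2 : {x : G | σ x ≠ x} = Set.univ := by
      ext x
      simp only [Set.mem_setOf_eq, Set.mem_univ, iff_true]
      rw [← Perm.mem_support, hσs]
      exact Finset.mem_univ x
    rw [h2] at h1
    intro x y
    exact h1.exists_pow_eq' Set.finite_univ trivial trivial
  have IND : ∀ (t : {x : G // x ∉ A}) (m : ℕ), ∃ k : ℕ,
      (((τ^k) t : {x : G // x ∉ A}) : G) = ef hc ((σ^m) (t:G)) := by
    intro t m
    induction m with
    | zero => exact ⟨0, by simpa using (ef_eq_self hc t.2).symm⟩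
    | succ m ih =>
      obtain ⟨k, hk⟩ := ih
      by_cases hm : (σ^m) (t:G) ∈ A
      · refine ⟨k, ?_⟩
        rw [hk]
        have hs : (σ^(m+1)) (t:G) = (σ^m) (t:G) + g := by
          rw [pow_succ', Perm.mul_apply, hσf _ hm]
        rw [hs, ef_add_g hc hm]
      · refine ⟨k+1, ?_⟩
        have hek : (((τ^k) t : {x : G // x ∉ A}) : G) = (σ^m) (t:G) := by
          rw [hk, ef_eq_self hc hm]
        rw [pow_succ', Perm.mul_apply, hτ, tauOf_apply, hek, pow_succ', Perm.mul_apply]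
  constructor
  · exact τ.bijective.bijOn_univ
  · intro t _ t' _
    obtain ⟨m, hm⟩ := hGcyc (t:G) (t':G)
    obtain ⟨k, hk⟩ := IND t m
    refine ⟨(k : ℤ), ?_⟩
    rw [zpow_natCast]
    apply Subtype.ext
    rw [hk, hm, ef_eq_self hc t'.2]

lemma sigmaOf_forced (τ : Perm {x : G // x ∉ A}) : ∀ a ∈ A, sigmaOf hc hc' τ a = a + g :=
  fun _ ha => sigmaOf_mem hc hc' τ ha

lemma sigmaOf_isCycleOn (τ : Perm {x : G // x ∉ A}) (hτ : τ.IsCycleOn Set.univ) :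
    (sigmaOf hc hc' τ).IsCycleOn Set.univ := by
  set σ := sigmaOf hc hc' τ with hσ
  have hforced : ∀ a ∈ A, σ a = a + g := sigmaOf_forced hc hc' τ
  have S1 : ∀ x : G, σ.SameCycle x (ef hc x) := fun x =>
    ⟨(kkf hc x : ℤ), by rw [zpow_natCast, pow_forced hc σ hforced]⟩
  have S2 : ∀ t : {x : G // x ∉ A}, σ.SameCycle (t : G) ((τ t : {x : G // x ∉ A}) : G) := by
    intro t
    have h1 : σ (t : G) = hstartf hc' ((τ t : {x : G // x ∉ A}) : G) := by
      rw [hσ, sigmaOf_not_mem hc hc' τ t.2]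
    have h2 : σ.SameCycle (t:G) (σ (t:G)) := ⟨1, by simp⟩
    have h4 : ef hc (σ (t:G)) = ((τ t : {x : G // x ∉ A}) : G) := by
      rw [h1, ef_hstartf hc hc' (τ t).2]
    have h3 := S1 (σ (t:G))
    rw [h4] at h3
    exact h2.trans h3
  have S3 : ∀ (t : {x : G // x ∉ A}) (k : ℕ),
      σ.SameCycle (t:G) (((τ^k) t : {x : G // x ∉ A}) : G) := by
    intro t k
    induction k with
    | zero => simpa using Perm.SameCycle.refl σ (t:G)
    | succ k ih =>
      have h5 := S2 ((τ^k) t)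
      rw [show τ ((τ^k) t) = (τ^(k+1)) t by rw [pow_succ', Perm.mul_apply]] at h5
      exact ih.trans h5
  constructor
  · exact σ.bijective.bijOn_univ
  · intro x _ y _
    have hτ' : τ.IsCycleOn ↑(Finset.univ : Finset {x : G // x ∉ A}) := by
      rwa [Finset.coe_univ]
    obtain ⟨k, -, hk⟩ := hτ'.exists_pow_eq (Finset.mem_univ ⟨ef hc x, ef_not_mem hc x⟩)
      (Finset.mem_univ ⟨ef hc y, ef_not_mem hc y⟩)
    have h6 := S3 ⟨ef hc x, ef_not_mem hc x⟩ k
    rw [hk] at h6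
    exact (S1 x).trans (h6.trans (S1 y).symm)

lemma isCycleOn_univ_ham (σ : Perm G) (h : σ.IsCycleOn (Set.univ : Set G))
    (h2 : 2 ≤ Fintype.card G) : σ.IsCycle ∧ σ.support = Finset.univ := by
  have hnt : (Set.univ : Set G).Nontrivial := by
    haveI : Nontrivial G := Fintype.one_lt_card_iff_nontrivial.1 h2
    exact Set.nontrivial_univ
  have hne : ∀ x : G, σ x ≠ x := fun x => h.apply_ne hnt trivial
  constructor
  · obtain ⟨x, -⟩ := hnt.nonempty
    exact ⟨x, hne x, fun y _ => h.2 trivial trivial⟩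
  · ext x
    simp [Perm.mem_support, hne x]

lemma head_not_mem (σ : Perm G) (hσf : ∀ a ∈ A, σ a = a + g) {x : G} (hx : x ∉ A) :
    σ x - g ∉ A := by
  intro hmem
  have h1 : σ ((σ x) - g) = σ x := by rw [hσf _ hmem]; abel
  have h2 : (σ x) - g = x := σ.injective h1
  rw [h2] at hmem
  exact hx hmem

lemma tauOf_sigmaOf (τ : Perm {x : G // x ∉ A}) :
    tauOf hc hc' (sigmaOf hc hc' τ) (sigmaOf_forced hc hc' τ) = τ := by
  apply Equiv.ext
  intro t
  apply Subtype.ext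
  rw [tauOf_apply, sigmaOf_not_mem hc hc' τ t.2, ef_hstartf hc hc' (τ t).2]

lemma sigmaOf_tauOf (σ : Perm G) (hσf : ∀ a ∈ A, σ a = a + g) :
    sigmaOf hc hc' (tauOf hc hc' σ hσf) = σ := by
  apply Equiv.ext
  intro x
  by_cases hx : x ∈ A
  · rw [sigmaOf_mem hc hc' _ hx, hσf x hx]
  · rw [sigmaOf_not_mem hc hc' _ hx, tauOf_apply,
      hstartf_ef hc hc' (head_not_mem σ hσf hx)]

end WithFintype
end Paths

end Aux

open scoped Classical in
theorem stmt6 (G : Type*) [AddCommGroup G] [Fintype G] [DecidableEq G]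
    (hG : 2 ≤ Fintype.card G) (g : G) (hg : g ≠ 0) (A : Finset G)
    (hA : ∀ x : G, ¬ ((fun h => x + h) '' (AddSubgroup.zmultiples g : Set G) ⊆ ↑A)) :
    (Finset.univ.filter
        (fun σ : Equiv.Perm G => IsHamCycle σ ∧ ∀ a ∈ A, σ a = a + g)).card =
      Nat.factorial (Fintype.card G - A.card - 1) := by
  classical
  have hc : ∀ x : G, ∃ k : ℕ, x + k • g ∉ A := by
    intro x
    obtain ⟨y, hy, hyA⟩ := Set.not_subset.1 (hA x)
    obtain ⟨h', hh', rfl⟩ := hy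
    obtain ⟨m, hm⟩ := AddSubgroup.mem_zmultiples_iff.1 hh'
    obtain ⟨k, hk⟩ := exists_nat_smul_eq g m
    refine ⟨k, ?_⟩
    have h2 : (k • g : G) = h' := by rw [← natCast_zsmul, hk, hm]
    rw [h2]
    exact hyA
  have hc' : ∀ t : G, ∃ j : ℕ, t - (j+1) • g ∉ A := by
    intro t
    obtain ⟨y, hy, hyA⟩ := Set.not_subset.1 (hA t)
    obtain ⟨h', hh', rfl⟩ := hy
    obtain ⟨m, hm⟩ := AddSubgroup.mem_zmultiples_iff.1 hh'
    obtain ⟨j, hj⟩ := exists_neg_nat_smul_eq g m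
    refine ⟨j, ?_⟩
    have h2 : t - (j+1) • g = t + h' := by
      rw [sub_eq_add_neg, ← natCast_zsmul, ← neg_zsmul]
      congr 1
      rw [← hm, ← hj]
      push_cast
      ring_nf
    rw [h2]
    exact hyA
  rw [← Fintype.card_subtype]
  haveI hne : Nonempty {x : G // x ∉ A} := ⟨⟨ef hc 0, ef_not_mem hc 0⟩⟩
  set Fwd : {σ : Equiv.Perm G // IsHamCycle σ ∧ ∀ a ∈ A, σ a = a + g} →
      {τ : Equiv.Perm {x : G // x ∉ A} // τ.IsCycleOn Set.univ} :=
    fun σ => ⟨tauOf hc hc' σ.1 σ.2.2, tauOf_isCycleOn hc hc' σ.1 σ.2.2 σ.2.1.1 σ.2.1.2⟩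
    with hFwd
  have hbij : Function.Bijective Fwd := by
    constructor
    · intro σ σ' h
      have h1 : tauOf hc hc' σ.1 σ.2.2 = tauOf hc hc' σ'.1 σ'.2.2 := congrArg Subtype.val h
      apply Subtype.ext
      rw [← sigmaOf_tauOf hc hc' σ.1 σ.2.2, ← sigmaOf_tauOf hc hc' σ'.1 σ'.2.2, h1]
    · intro τ
      refine ⟨⟨sigmaOf hc hc' τ.1,
        isCycleOn_univ_ham _ (sigmaOf_isCycleOn hc hc' τ.1 τ.2) hG,
        sigmaOf_forced hc hc' τ.1⟩, ?_⟩
      apply Subtype.ext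
      exact tauOf_sigmaOf hc hc' τ.1
  rw [Fintype.card_of_bijective hbij, card_full_cycles]
  congr 1
  rw [Fintype.card_subtype]
  have hfc : (Finset.univ.filter (fun x : G => x ∉ A)) = Aᶜ := by
    ext x
    simp [Finset.mem_compl]
  rw [hfc, Finset.card_compl]
end

section
/- Let G be a nontrivial finite abelian group and let S be a nonempty subset of G. Let H be the subgroup of G generated by the difference set S − S = {s − t : s, t ∈ S}. Then the addition Cayley graph Cay⁺(G,S) is connected if and only if either H = G, or H has index 2 in G and S ∩ H = ∅. -/
section
variable {G : Type*} [AddCommGroup G]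

lemma cayStepA (S : Set G) {s t : G} (hs : s ∈ S) (ht : t ∈ S) (g : G) :
    (addCayley G S).Reachable g (g + (s - t)) := by
  by_cases hd : s - t = 0
  · rw [hd, add_zero]
  have hst : s ≠ t := sub_ne_zero.mp hd
  by_cases h1 : t = g + g
  · have htar : g + (s - t) = s - g := by rw [h1]; abel
    rw [htar]
    refine SimpleGraph.Adj.reachable ⟨?_, ?_⟩
    · intro h
      apply hst
      rw [eq_sub_iff_add_eq] at h
      rw [h1, ← h]
    · simpa using hs
  · have e1 : (addCayley G S).Adj g (t - g) := by
      refine ⟨?_, by simpa using ht⟩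
      intro h
      exact h1 (by rw [eq_sub_iff_add_eq] at h; rw [← h])
    by_cases h2 : t - g = g + (s - t)
    · rw [← h2]; exact e1.reachable
    · refine e1.reachable.trans (SimpleGraph.Adj.reachable ⟨h2, ?_⟩)
      have : (t - g) + (g + (s - t)) = s := by abel
      rw [this]; exact hs

lemma cayStepB (S : Set G) (H : AddSubgroup G)
    (hH : H = AddSubgroup.closure {x : G | ∃ s ∈ S, ∃ t ∈ S, x = s - t}) :
    ∀ h ∈ H, ∀ g : G, (addCayley G S).Reachable g (g + h) := by
  intro h hh
  rw [hH] at hh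
  induction hh using AddSubgroup.closure_induction with
  | mem x hx =>
    obtain ⟨s, hs, t, ht, rfl⟩ := hx
    exact fun g => cayStepA S hs ht g
  | zero => intro g; rw [add_zero]
  | add x y _ _ ihx ihy =>
    intro g
    have := (ihx g).trans (ihy (g + x))
    rwa [add_assoc] at this
  | neg x _ ih =>
    intro g
    have := (ih (g + -x)).symm
    simpa using this

lemma cayStepC (S : Set G) {s₀ : G} (hs₀ : s₀ ∈ S) (g : G) :
    (addCayley G S).Reachable g (s₀ - g) := by
  by_cases h : s₀ - g = g
  · rw [h]
  · exact SimpleGraph.Adj.reachable ⟨Ne.symm h, by simpa using hs₀⟩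

lemma cayStepD (S : Set G) (H : AddSubgroup G)
    (hH : H = AddSubgroup.closure {x : G | ∃ s ∈ S, ∃ t ∈ S, x = s - t})
    {s₀ : G} (hs₀ : s₀ ∈ S) {u v : G} (w : (addCayley G S).Walk u v) :
    v - u ∈ H ∨ v - (s₀ - u) ∈ H := by
  induction w with
  | nil => left; simpa using H.zero_mem
  | @cons u b v h p ih =>
    have hub : (u + b) - s₀ ∈ H := by
      rw [hH]
      exact AddSubgroup.subset_closure ⟨u + b, h.2, s₀, hs₀, rfl⟩
    rcases ih with h1 | h1
    · right
      have : v - (s₀ - u) = (v - b) + ((u + b) - s₀) := by abel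
      rw [this]; exact H.add_mem h1 hub
    · left
      have : v - u = (v - (s₀ - b)) - ((u + b) - s₀) := by abel
      rw [this]; exact H.sub_mem h1 hub
end

theorem stmt8 (G : Type*) [AddCommGroup G] [Fintype G] [Nontrivial G]
    (S : Set G) (hS : S.Nonempty)
    (H : AddSubgroup G) (hH : H = AddSubgroup.closure {x : G | ∃ s ∈ S, ∃ t ∈ S, x = s - t}) :
    (addCayley G S).Connected ↔ (H = ⊤ ∨ (H.index = 2 ∧ ∀ s ∈ S, s ∉ H)) := by
  obtain ⟨s₀, hs₀⟩ := hS
  constructor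
  · intro hconn
    by_cases hmem : s₀ ∈ H
    · left
      rw [eq_top_iff]
      intro v _
      obtain ⟨w⟩ := hconn.preconnected 0 v
      rcases cayStepD S H hH hs₀ w with h | h
      · simpa using h
      · have hv : v = (v - (s₀ - 0)) + s₀ := by abel
        rw [hv]; exact H.add_mem h hmem
    · right
      have key : ∀ v : G, v ∈ H ∨ v - s₀ ∈ H := by
        intro v
        obtain ⟨w⟩ := hconn.preconnected 0 v
        rcases cayStepD S H hH hs₀ w with h | h
        · left; simpa using h
        · right; simpa using h
      constructor
      · rw [AddSubgroup.index_eq_two_iff]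
        refine ⟨-s₀, fun b => ?_⟩
        by_cases hb : b ∈ H
        · refine Or.inr ⟨hb, fun hba => hmem ?_⟩
          have : -s₀ ∈ H := by simpa using H.sub_mem hba hb
          simpa using H.neg_mem this
        · refine Or.inl ⟨?_, hb⟩
          have := (key b).resolve_left hb
          simpa [sub_eq_add_neg] using this
      · intro s hsS hsH
        apply hmem
        have hgen : s - s₀ ∈ H := by
          rw [hH]; exact AddSubgroup.subset_closure ⟨s, hsS, s₀, hs₀, rfl⟩
        have : s₀ = s - (s - s₀) := by abel
        rw [this]; exact H.sub_mem hsH hgen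
  · rintro (htop | ⟨hidx, hdisj⟩)
    · refine ⟨fun u v => ?_⟩
      have hv : v - u ∈ H := htop ▸ AddSubgroup.mem_top _
      have := cayStepB S H hH _ hv u
      rwa [add_sub_cancel] at this
    · refine ⟨fun u v => ?_⟩
      by_cases hd : v - u ∈ H
      · have := cayStepB S H hH _ hd u
        rwa [add_sub_cancel] at this
      · have hns : (-s₀ : G) ∉ H := fun h => hdisj s₀ hs₀ (by simpa using H.neg_mem h)
        have h2 : (v - u) + -s₀ ∈ H := by
          rw [AddSubgroup.add_mem_iff_of_index_two hidx]
          exact ⟨fun h => absurd h hd, fun h => absurd h hns⟩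
        have h3 : v - (s₀ - u) ∈ H := by
          have huu : u + u ∈ H := AddSubgroup.add_self_mem_of_index_two hidx u
          have : v - (s₀ - u) = ((v - u) + -s₀) + (u + u) := by abel
          rw [this]; exact H.add_mem h2 huu
        have r1 := cayStepC S hs₀ u
        have r2 := cayStepB S H hH _ h3 (s₀ - u)
        rw [add_sub_cancel] at r2
        exact r1.trans r2
end

section
/- Let G be a finite abelian group with |G| ≥ 3. Then every Hamiltonian cycle C on G satisfies |S(C)| ≥ 2, and there exists a Hamiltonian cycle C on G with |S(C)| = 2 if and only if G has a cyclic subgroup of index 2 (equivalently, either G is cyclic of even order, or G ≅ (ℤ/2ℤ) ⊕ (ℤ/mℤ) with m even). -/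
lemma ham_orderOf {G : Type*} [Fintype G] [DecidableEq G] {σ : Equiv.Perm G}
    (hσ : IsHamCycle σ) : orderOf σ = Fintype.card G := by
  rw [hσ.1.orderOf, hσ.2, Finset.card_univ]

lemma ham_sq_ne {G : Type*} [Fintype G] [DecidableEq G] {σ : Equiv.Perm G}
    (hσ : IsHamCycle σ) (h3 : 3 ≤ Fintype.card G) (g : G) : σ (σ g) ≠ g := by
  intro h
  have hg : σ g ≠ g :=
    Equiv.Perm.mem_support.mp (hσ.2 ▸ Finset.mem_univ g)
  have h2 : σ ^ 2 = 1 := hσ.1.pow_eq_one_iff.mpr ⟨g, hg, by simpa [pow_succ] using h⟩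
  have hd := orderOf_dvd_of_pow_eq_one h2
  rw [ham_orderOf hσ] at hd
  have := Nat.le_of_dvd (by norm_num) hd
  omega

lemma part1 {G : Type*} [AddCommGroup G] [Fintype G] [DecidableEq G]
    (h3 : 3 ≤ Fintype.card G) (σ : Equiv.Perm G) (hσ : IsHamCycle σ) :
    2 ≤ (cycleSums σ).card := by
  by_contra h
  push_neg at h
  have hne : (cycleSums σ).Nonempty := by
    have : (0 : G) + σ 0 ∈ cycleSums σ := Finset.mem_image_of_mem _ (Finset.mem_univ _)
    exact ⟨_, this⟩
  interval_cases hc : (cycleSums σ).card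
  · exact absurd (Finset.card_eq_zero.mp hc ▸ hne) (by simp)
  · obtain ⟨s, hs⟩ := Finset.card_eq_one.mp hc
    have hall : ∀ g : G, g + σ g = s := by
      intro g
      have : g + σ g ∈ cycleSums σ := Finset.mem_image_of_mem _ (Finset.mem_univ _)
      rw [hs, Finset.mem_singleton] at this
      exact this
    have h1 := hall (0 : G)
    have h2 := hall (σ 0)
    have : σ (σ 0) = 0 := by
      have h4 : σ 0 + σ (σ 0) = σ 0 + 0 := by rw [h2, ← h1, zero_add, add_zero]
      exact add_left_cancel h4
    exact ham_sq_ne hσ h3 0 this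

lemma fwd_key {G : Type*} [AddCommGroup G] [Fintype G] [DecidableEq G]
    (h3 : 3 ≤ Fintype.card G) {σ : Equiv.Perm G} (hσ : IsHamCycle σ) {s t : G}
    (hst : s ≠ t)
    (hmem : ∀ g : G, g + σ g = s ∨ g + σ g = t)
    (h0 : 0 + σ 0 = s) :
    ∃ (H : AddSubgroup G) (x : G), H.index = 2 ∧ H = AddSubgroup.zmultiples x := by
  have halts : ∀ g : G, g + σ g = s → σ g + σ (σ g) = t := by
    intro g h
    rcases hmem (σ g) with h' | h'
    · exfalso
      apply ham_sq_ne hσ h3 g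
      exact add_left_cancel (h'.trans (h.symm.trans (add_comm g (σ g))))
    · exact h'
  have haltt : ∀ g : G, g + σ g = t → σ g + σ (σ g) = s := by
    intro g h
    rcases hmem (σ g) with h' | h'
    · exact h'
    · exfalso
      apply ham_sq_ne hσ h3 g
      exact add_left_cancel (h'.trans (h.symm.trans (add_comm g (σ g))))
  set x : G := t - s with hx
  have claim : ∀ k : ℕ, (σ ^ (2 * k)) 0 = k • x ∧
      (σ ^ (2 * k)) 0 + σ ((σ ^ (2 * k)) 0) = s := by
    intro k
    induction k with
    | zero => simpa using h0
    | succ k ih =>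
      obtain ⟨hg, hs'⟩ := ih
      set g : G := (σ ^ (2 * k)) 0 with hgdef
      have ht' : σ g + σ (σ g) = t := halts g hs'
      have hσg : σ g = s - g := eq_sub_of_add_eq' hs'
      have hσσg : σ (σ g) = g + x := by
        rw [eq_sub_of_add_eq' ht', hσg, hx]; abel
      have hpow : (σ ^ (2 * (k + 1))) 0 = σ (σ g) := by
        have : 2 * (k + 1) = (2 * k) + 1 + 1 := by ring
        rw [this, pow_succ', pow_succ']
        simp [Equiv.Perm.mul_apply, hgdef]
      constructor
      · rw [hpow, hσσg, hg, succ_nsmul]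
      · rw [hpow]
        have := haltt (σ g) ht'
        exact this
  have hpown : σ ^ Fintype.card G = 1 := by
    rw [← ham_orderOf hσ]; exact pow_orderOf_eq_one σ
  have heven : Even (Fintype.card G) := by
    by_contra hodd
    rw [Nat.even_iff] at hodd
    have hmod : Fintype.card G = 2 * (Fintype.card G / 2) + 1 := by omega
    set m := Fintype.card G / 2
    have h1 : (σ ^ (2 * m + 1)) 0 = 0 := by
      rw [← hmod, hpown]; rfl
    have h2 : (σ ^ (2 * m + 1)) 0 = σ ((σ ^ (2 * m)) 0) := by
      rw [pow_succ']; simp [Equiv.Perm.mul_apply]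
    have h4 := halts _ (claim m).2
    rw [← h2, h1] at h4
    exact hst (h0.symm.trans h4)
  obtain ⟨m, hm⟩ := heven
  have hm' : Fintype.card G = 2 * m := by omega
  have hm0 : m • x = 0 := by
    have h := (claim m).1
    rw [← hm', hpown] at h
    exact h.symm
  have hx0 : x ≠ 0 := sub_ne_zero.mpr (Ne.symm hst)
  set d := addOrderOf x with hd
  have hddm : d ∣ m := addOrderOf_dvd_of_nsmul_eq_zero hm0
  have hσ2d : (σ ^ (2 * d)) 0 = 0 :=
    (claim d).1.trans (by rw [hd]; exact addOrderOf_nsmul_eq_zero x)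
  have hσ0 : σ 0 ≠ 0 := Equiv.Perm.mem_support.mp (hσ.2 ▸ Finset.mem_univ 0)
  have h2d1 : σ ^ (2 * d) = 1 := hσ.1.pow_eq_one_iff.mpr ⟨0, hσ0, hσ2d⟩
  have hnd : Fintype.card G ∣ 2 * d := by
    rw [← ham_orderOf hσ]; exact orderOf_dvd_of_pow_eq_one h2d1
  rw [hm'] at hnd h3
  have hmdd : m ∣ d := (mul_dvd_mul_iff_left (by norm_num : (2:ℕ) ≠ 0)).mp hnd
  have hdm : d = m := Nat.dvd_antisymm hddm hmdd
  refine ⟨AddSubgroup.zmultiples x, x, ?_, rfl⟩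
  have hcard : Nat.card (AddSubgroup.zmultiples x) = m := by
    rw [Nat.card_zmultiples, ← hd, hdm]
  have hindex : (AddSubgroup.zmultiples x).index * Nat.card (AddSubgroup.zmultiples x)
      = Nat.card G := AddSubgroup.index_mul_card _
  rw [hcard, Nat.card_eq_fintype_card, hm'] at hindex
  have hmpos : 0 < m := by omega
  exact Nat.eq_of_mul_eq_mul_right hmpos hindex

lemma bwd_key {G : Type*} [AddCommGroup G] [Fintype G] [DecidableEq G]
    (h3 : 3 ≤ Fintype.card G) (H : AddSubgroup G) (x : G)
    (hidx : H.index = 2) (hHx : H = AddSubgroup.zmultiples x) :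
    ∃ σ : Equiv.Perm G, IsHamCycle σ ∧ (cycleSums σ).card = 2 := by
  classical
  have hxH : x ∈ H := hHx ▸ AddSubgroup.mem_zmultiples x
  have hx0 : x ≠ 0 := by
    rintro rfl
    rw [hHx, AddSubgroup.zmultiples_zero_eq_bot, AddSubgroup.index_bot,
      Nat.card_eq_fintype_card] at hidx
    omega
  have hHtop : H ≠ ⊤ := by
    intro h
    rw [h, AddSubgroup.index_top] at hidx
    omega
  obtain ⟨b, hb⟩ : ∃ b : G, b ∉ H := by
    by_contra h
    push_neg at h
    exact hHtop ((AddSubgroup.eq_top_iff' H).mpr h)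
  -- quotient has two elements
  have hcardQ : Nat.card (G ⧸ H) = 2 := by rw [← AddSubgroup.index_eq_card]; exact hidx
  have hfinQ : Finite (G ⧸ H) := Nat.finite_of_card_ne_zero (by omega)
  have hcos : ∀ a c : G, a ∉ H → c ∉ H → a - c ∈ H := by
    intro a c ha hc
    by_contra hne
    have hQa : (a : G ⧸ H) ≠ 0 := fun h => ha ((QuotientAddGroup.eq_zero_iff a).mp h)
    have hQc : (c : G ⧸ H) ≠ 0 := fun h => hc ((QuotientAddGroup.eq_zero_iff c).mp h)
    have hQac : (a : G ⧸ H) ≠ (c : G ⧸ H) := by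
      intro h
      apply hne
      have := (QuotientAddGroup.eq ).mp h
      simpa [neg_add_eq_sub] using (AddSubgroup.neg_mem H this)
    haveI := Fintype.ofFinite (G ⧸ H)
    have : 2 < Fintype.card (G ⧸ H) :=
      Fintype.two_lt_card_iff.mpr ⟨0, a, c, hQa.symm, hQc.symm, hQac⟩
    rw [← Nat.card_eq_fintype_card, hcardQ] at this
    omega
  have hsubH : ∀ g : G, g ∈ H → b - g ∉ H := by
    intro g hg hmem
    exact hb (by simpa using H.add_mem hmem hg)
  have hsubH' : ∀ g : G, g ∉ H → x + b - g ∈ H := by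
    intro g hg
    have : b - g ∈ H := hcos b g hb hg
    simpa [add_sub_assoc] using H.add_mem hxH this
  set f : G → G := fun g => if g ∈ H then b - g else x + b - g with hf
  have hinj : Function.Injective f := by
    intro g1 g2 h
    by_cases h1 : g1 ∈ H <;> by_cases h2 : g2 ∈ H <;> simp only [hf, h1, h2, if_pos, if_neg,
      if_true, if_false] at h
    · exact (sub_right_injective h)
    · exact absurd (h ▸ hsubH g1 h1) (fun hh => hh (hsubH' g2 h2))
    · exact absurd (h ▸ hsubH' g1 h1) (fun hh => (hsubH g2 h2) hh)
    · exact (sub_right_injective h)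
  set σ : Equiv.Perm G := Equiv.ofBijective f (Finite.injective_iff_bijective.mp hinj)
    with hσdef
  have hσapp : ∀ g : G, σ g = f g := fun g => rfl
  have hσin : ∀ g : G, g ∈ H → σ g = b - g := by
    intro g hg; rw [hσapp, hf]; simp [hg]
  have hσout : ∀ g : G, g ∉ H → σ g = x + b - g := by
    intro g hg; rw [hσapp, hf]; simp [hg]
  have hσmem : ∀ g : G, g ∈ H → σ g ∉ H := by
    intro g hg; rw [hσin g hg]; exact hsubH g hg
  have hσmem' : ∀ g : G, g ∉ H → σ g ∈ H := by
    intro g hg; rw [hσout g hg]; exact hsubH' g hg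
  have hfix : ∀ g : G, σ g ≠ g := by
    intro g h
    by_cases hg : g ∈ H
    · exact hσmem g hg (by rw [h]; exact hg)
    · exact hg (by rw [← h]; exact hσmem' g hg)
  have hsupp : σ.support = Finset.univ :=
    Finset.eq_univ_iff_forall.mpr fun g => Equiv.Perm.mem_support.mpr (hfix g)
  have hσ2 : ∀ g : G, g ∈ H → σ (σ g) = g + x := by
    intro g hg
    rw [hσin g hg, hσout _ (hsubH g hg)]
    abel
  have hsq : ∀ g : G, (σ ^ (2 : ℤ)) g = σ (σ g) := by
    intro g
    rw [zpow_two]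
    rfl
  have hsqinv : ∀ g : G, g ∈ H → ((σ ^ (2 : ℤ))⁻¹) g = g - x := by
    intro g hg
    have h1 : (σ ^ (2 : ℤ)) (g - x) = g := by
      rw [hsq, hσ2 _ (H.sub_mem hg hxH)]
      abel
    have h2 := (σ ^ (2 : ℤ)).symm_apply_apply (g - x)
    rw [h1] at h2
    exact h2
  have hmemk : ∀ k : ℤ, k • x ∈ H := by
    intro k
    rw [hHx]
    exact (AddSubgroup.zmultiples x).zsmul_mem (AddSubgroup.mem_zmultiples x) k
  have claimZ : ∀ k : ℤ, (σ ^ (2 * k)) 0 = k • x := by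
    intro k
    induction k using Int.induction_on with
    | zero => simp
    | succ i ih =>
      have he : (2 : ℤ) * (i + 1) = 2 + 2 * i := by ring
      rw [he, zpow_add, Equiv.Perm.mul_apply, ih, hsq, hσ2 _ (hmemk i)]
      rw [add_zsmul, one_zsmul]
    | pred i ih =>
      have he : (2 : ℤ) * (-i - 1) = (-2) + 2 * (-i) := by ring
      rw [he, zpow_add, Equiv.Perm.mul_apply, ih, zpow_neg, hsqinv _ (hmemk (-i))]
      rw [sub_zsmul, one_zsmul]
      abel
  have hodd : ∀ k : ℤ, (σ ^ (2 * k + 1)) 0 = b - k • x := by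
    intro k
    have he : (2 : ℤ) * k + 1 = 1 + 2 * k := by ring
    rw [he, zpow_add, Equiv.Perm.mul_apply, claimZ, zpow_one, hσin _ (hmemk k)]
  have hcyc : σ.IsCycle := by
    refine ⟨0, hfix 0, fun h _ => ?_⟩
    by_cases hh : h ∈ H
    · obtain ⟨k, hk⟩ := (AddSubgroup.mem_zmultiples_iff).mp (hHx ▸ hh)
      exact ⟨2 * k, by rw [claimZ k, hk]⟩
    · obtain ⟨k, hk⟩ := (AddSubgroup.mem_zmultiples_iff).mp (hHx ▸ hcos b h hb hh)
      refine ⟨2 * k + 1, ?_⟩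
      rw [hodd k, hk]
      abel
  refine ⟨σ, ⟨hcyc, hsupp⟩, ?_⟩
  have hsums : cycleSums σ = {b, x + b} := by
    ext y
    simp only [cycleSums, Finset.mem_image, Finset.mem_univ, true_and, Finset.mem_insert,
      Finset.mem_singleton]
    constructor
    · rintro ⟨g, rfl⟩
      by_cases hg : g ∈ H
      · left; rw [hσin g hg]; abel
      · right; rw [hσout g hg]; abel
    · rintro (rfl | rfl)
      · exact ⟨0, by rw [hσin 0 H.zero_mem]; abel⟩
      · exact ⟨b, by rw [hσout b hb]; abel⟩
  rw [hsums]
  rw [Finset.card_insert_of_notMem (by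
    simp only [Finset.mem_singleton]
    exact fun h => hx0 (right_eq_add.mp h)), Finset.card_singleton]

theorem stmt13 (G : Type*) [AddCommGroup G] [Fintype G] [DecidableEq G]
    (h3 : 3 ≤ Fintype.card G) :
    (∀ σ : Equiv.Perm G, IsHamCycle σ → 2 ≤ (cycleSums σ).card) ∧
    ((∃ σ : Equiv.Perm G, IsHamCycle σ ∧ (cycleSums σ).card = 2) ↔
      ∃ (H : AddSubgroup G) (x : G), H.index = 2 ∧ H = AddSubgroup.zmultiples x) := by
  refine ⟨part1 h3, ?_, ?_⟩
  · rintro ⟨σ, hσ, hc⟩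
    obtain ⟨s, t, hst, hset⟩ := Finset.card_eq_two.mp hc
    have hmem : ∀ g : G, g + σ g = s ∨ g + σ g = t := by
      intro g
      have : g + σ g ∈ cycleSums σ := Finset.mem_image_of_mem _ (Finset.mem_univ g)
      rw [hset] at this
      simpa using this
    rcases hmem 0 with h0 | h0
    · exact fwd_key h3 hσ hst hmem h0
    · exact fwd_key h3 hσ hst.symm (fun g => (hmem g).symm) h0
  · rintro ⟨H, x, hidx, hHx⟩
    exact bwd_key h3 H x hidx hHx
end

section
/- Let G be a finite nontrivial abelian group of odd order, and let smin(G) denote the minimum of |S(C)| over all Hamiltonian cycles C on G. Then rk(G) + 1 ≤ smin(G) ≤ 2·rk(G) + 1. -/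
section Aux
open AddSubgroup
variable {G : Type*} [AddCommGroup G] [Fintype G] [DecidableEq G]


lemma lower_bound (hodd : Odd (Fintype.card G)) {σ : Equiv.Perm G}
    (hc : σ.IsCycle) (hs : σ.support = Finset.univ) :
    addRank G + 1 ≤ (cycleSums σ).card := by
  classical
  set S := cycleSums σ with hS
  have hs₀ : (0 : G) + σ 0 ∈ S := Finset.mem_image_of_mem _ (Finset.mem_univ _)
  set s₀ : G := (0 : G) + σ 0 with hs₀def
  set K : AddSubgroup G := closure ((fun s => s - s₀) '' (S : Set G)) with hK
  have hmemK : ∀ s ∈ S, s - s₀ ∈ K := fun s hsS =>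
    subset_closure ⟨s, by exact_mod_cast hsS, rfl⟩
  have key : ∀ i : ℕ, (Even i → (σ ^ i) 0 ∈ K) ∧ (¬ Even i → (σ ^ i) 0 - s₀ ∈ K) := by
    intro i
    induction i with
    | zero => exact ⟨fun _ => zero_mem _, fun h => absurd Even.zero h⟩
    | succ i ih =>
      have happ : (σ ^ (i + 1)) 0 = σ ((σ ^ i) 0) := by
        rw [pow_succ' σ i]; rfl
      set g : G := (σ ^ i) 0 with hg
      have hsum : g + σ g ∈ S := Finset.mem_image_of_mem _ (Finset.mem_univ _)
      have hsum' : (g + σ g) - s₀ ∈ K := hmemK _ hsum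
      constructor
      · intro hev
        have hio : ¬ Even i := by
          intro h; exact (Nat.even_add_one.mp hev) h
        have h1 : g - s₀ ∈ K := ih.2 hio
        have : σ g = ((g + σ g) - s₀) - (g - s₀) := by abel
        rw [happ, this]
        exact sub_mem hsum' h1
      · intro hod
        have hie : Even i := by
          by_contra h
          exact hod (Nat.even_add_one.mpr h)
        have h1 : g ∈ K := ih.1 hie
        have : σ g - s₀ = ((g + σ g) - s₀) - g := by abel
        rw [happ, this]
        exact sub_mem hsum' h1
  have hord : orderOf σ = Fintype.card G := by
    rw [hc.orderOf, hs, Finset.card_univ]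
  have hpow : (σ ^ Fintype.card G) 0 = 0 := by
    rw [← hord, pow_orderOf_eq_one]; rfl
  have hnodd : ¬ Even (Fintype.card G) := Nat.not_even_iff_odd.mpr hodd
  have hs₀K : s₀ ∈ K := by
    have := (key (Fintype.card G)).2 hnodd
    rw [hpow, zero_sub] at this
    simpa using neg_mem this
  have hall : ∀ g : G, g ∈ K := by
    intro g
    have hmove : ∀ x : G, σ x ≠ x := by
      intro x
      have : x ∈ σ.support := hs ▸ Finset.mem_univ x
      exact Equiv.Perm.mem_support.mp this
    obtain ⟨i, hi⟩ := hc.exists_pow_eq (hmove 0) (hmove g)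
    rcases Nat.even_or_odd i with he | ho
    · rw [← hi]; exact (key i).1 he
    · have := (key i).2 (Nat.not_even_iff_odd.mpr ho)
      rw [hi] at this
      have := add_mem this hs₀K
      simpa using this
  have hKtop : K = ⊤ := by
    rw [eq_top_iff]; intro g _; exact hall g
  set T : Finset G := S.image (fun s => s - s₀) with hT
  have hTcoe : (T : Set G) = (fun s => s - s₀) '' (S : Set G) := Finset.coe_image
  have h0T : (0 : G) ∈ T := Finset.mem_image.mpr ⟨s₀, hs₀, sub_self _⟩
  have hclT : closure ((T.erase 0 : Finset G) : Set G) = ⊤ := by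
    rw [eq_top_iff, ← hKtop, hK, ← hTcoe]
    apply (closure_le _).mpr
    intro x hx
    rcases eq_or_ne x 0 with rfl | hne
    · exact zero_mem _
    · exact subset_closure (Finset.mem_coe.mpr (Finset.mem_erase.mpr ⟨hne, hx⟩))
  have h1 : addRank G ≤ (T.erase 0).card := Nat.sInf_le ⟨T.erase 0, rfl, hclT⟩
  have h2 : (T.erase 0).card = T.card - 1 := Finset.card_erase_of_mem h0T
  have h3 : T.card ≤ S.card := Finset.card_image_le
  have h4 : 1 ≤ T.card := Finset.card_pos.mpr ⟨0, h0T⟩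
  omega



variable {G : Type*} [AddCommGroup G] [Fintype G] [DecidableEq G]

def CycFun (H : AddSubgroup G) (t : ℕ) (F : ℕ → G) (S : Finset G) : Prop :=
  Odd t ∧ (∀ i, F (i + t) = F i) ∧ (∀ i < t, ∀ j < t, F i = F j → i = j) ∧
  (∀ g, g ∈ H ↔ ∃ i < t, F i = g) ∧ (∀ i, F i + F (i + 1) ∈ S)

lemma per_mod {α : Type*} {t : ℕ} (ht : 0 < t) {F : ℕ → α} (h : ∀ i, F (i + t) = F i)
    (i : ℕ) : F i = F (i % t) := by
  induction i using Nat.strong_induction_on with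
  | _ i ih =>
    rcases lt_or_ge i t with hlt | hge
    · rw [Nat.mod_eq_of_lt hlt]
    · have h1 : i - t + t = i := Nat.sub_add_cancel hge
      have h2 : F i = F (i - t) := by conv_lhs => rw [← h1, h (i - t)]
      rw [h2, ih (i - t) (by omega), Nat.mod_eq_sub_mod hge]

lemma int_eq_zero_of_dvd_of_natAbs_lt {m : ℕ} {d : ℤ} (h : (m : ℤ) ∣ d)
    (h2 : d.natAbs < m) : d = 0 := by
  rcases h with ⟨c, rfl⟩
  rcases eq_or_ne c 0 with rfl | hc
  · simp
  · exfalso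
    have h3 : ((m : ℤ) * c).natAbs = m * c.natAbs := by
      rw [Int.natAbs_mul, Int.natAbs_natCast]
    have h4 : 1 ≤ c.natAbs := by omega
    have h5 : m * 1 ≤ m * c.natAbs := Nat.mul_le_mul_left _ h4
    omega

lemma cyc_step (hodd : Odd (Fintype.card G)) {H : AddSubgroup G} {t : ℕ} {F : ℕ → G}
    {S : Finset G} (hc : CycFun H t F S) (a : G) :
    ∃ t' F' S', CycFun (H ⊔ closure {a}) t' F' S' ∧ S'.card ≤ S.card + 2 := by
  classical
  obtain ⟨hoddt, hper, hinj, hmem, hsum⟩ := hc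
  have ht : 0 < t := hoddt.pos
  have hmod : ∀ i, F i = F (i % t) := per_mod ht hper
  have hFH : ∀ i, F i ∈ H := fun i => (hmem _).mpr ⟨i % t, Nat.mod_lt _ ht, (hmod i).symm⟩
  set K := H ⊔ closure ({a} : Set G) with hKdef
  have haK : a ∈ K := (le_sup_right : closure ({a} : Set G) ≤ K) (subset_closure rfl)
  have hHK : H ≤ K := le_sup_left
  -- order of a modulo H
  set m := addOrderOf ((a : G ⧸ H)) with hm
  have hmpos : 0 < m := addOrderOf_pos _
  have hdvd : ∀ j : ℤ, j • a ∈ H ↔ (m : ℤ) ∣ j := by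
    intro j
    rw [← QuotientAddGroup.eq_zero_iff (N := H) (j • a)]
    have h1 : ((j • a : G) : G ⧸ H) = j • ((a : G ⧸ H)) :=
      map_zsmul (QuotientAddGroup.mk' H) j a
    rw [h1, ← addOrderOf_dvd_iff_zsmul_eq_zero]
  have hmodd : Odd m := by
    have h1 : m ∣ Nat.card (G ⧸ H) := addOrderOf_dvd_natCard _
    have h2 : Nat.card G = Nat.card (G ⧸ H) * Nat.card H :=
      AddSubgroup.card_eq_card_quotient_mul_card_addSubgroup H
    have h3 : m ∣ Fintype.card G := by
      rw [← Nat.card_eq_fintype_card]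
      exact h1.trans ⟨Nat.card H, h2⟩
    rcases Nat.even_or_odd m with he | ho
    · exfalso
      have : (2 : ℕ) ∣ Fintype.card G := dvd_trans he.two_dvd h3
      rw [Nat.odd_iff] at hodd
      omega
    · exact ho
  rcases Nat.lt_or_ge m 2 with hm1 | hm2
  · -- m = 1 : a ∈ H, nothing to do
    have hm1' : m = 1 := by omega
    have haH : a ∈ H := by
      have := (hdvd 1).mpr (by rw [hm1']; exact one_dvd _)
      simpa using this
    have hKH : K = H := by
      rw [hKdef]
      exact sup_eq_left.mpr ((closure_le _).mpr (by simpa using haH))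
    exact ⟨t, F, S, by rw [hKH]; exact ⟨hoddt, hper, hinj, hmem, hsum⟩, by omega⟩
  · obtain ⟨k, hk⟩ := hmodd
    have hk1 : 1 ≤ k := by omega
    set n := m * t with hn
    have hnt : n = t + 2 * t * k := by rw [hn, hk]; ring
    have htn : t < n := by
      have h1 : 2 * t * 1 ≤ 2 * t * k := Nat.mul_le_mul_left _ hk1
      have h2 : 2 * t * 1 = 2 * t := by ring
      omega
    set sstar : G := F (t - 1) + F t with hsstar
    have hsstarS : sstar ∈ S := by
      have := hsum (t - 1)
      rwa [show t - 1 + 1 = t by omega] at this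
    set F0 : ℕ → G := fun i =>
      if i < t then F i
      else (if (i - t) % (2 * t) % 2 = 0 then ((((i - t) / (2 * t) : ℕ) : ℤ) + 1)
            else -((((i - t) / (2 * t) : ℕ) : ℤ) + 1)) • a + F ((i - t) % (2 * t)) with hF0
    have hlow : ∀ i < t, F0 i = F i := fun i hi => by simp only [hF0, if_pos hi]
    have hblock : ∀ b i', i' < 2 * t →
        F0 (t + 2 * t * b + i') =
          (if i' % 2 = 0 then ((b : ℤ) + 1) else -((b : ℤ) + 1)) • a + F i' := by
      intro b i' hi'
      have h1 : ¬ (t + 2 * t * b + i' < t) := by omega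
      have h2 : t + 2 * t * b + i' - t = 2 * t * b + i' := by omega
      have h3 : (2 * t * b + i') % (2 * t) = i' := by
        rw [Nat.mul_add_mod, Nat.mod_eq_of_lt hi']
      have h4 : (2 * t * b + i') / (2 * t) = b := by
        rw [Nat.mul_add_div (by omega), Nat.div_eq_of_lt hi', add_zero]
      simp only [hF0, if_neg h1, h2, h3, h4]
    have hdecomp : ∀ i, t ≤ i → i < n → ∃ b i', b < k ∧ i' < 2 * t ∧ i = t + 2 * t * b + i' := by
      intro i h1 h2
      refine ⟨(i - t) / (2 * t), (i - t) % (2 * t), ?_, Nat.mod_lt _ (by omega), by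
        have := Nat.div_add_mod (i - t) (2 * t); omega⟩
      have h5 : i - t < 2 * t * k := by omega
      rw [Nat.div_lt_iff_lt_mul (show 0 < 2 * t by omega)]
      have : 2 * t * k = k * (2 * t) := by ring
      omega
    have hcases : ∀ i, i < n → (i < t ∧ F0 i = F i) ∨
        (∃ b i', b < k ∧ i' < 2 * t ∧ i = t + 2 * t * b + i' ∧
          F0 i = (if i' % 2 = 0 then ((b : ℤ) + 1) else -((b : ℤ) + 1)) • a + F i') := by
      intro i hi
      rcases lt_or_ge i t with h1 | h1
      · exact Or.inl ⟨h1, hlow i h1⟩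
      · obtain ⟨b, i', hb, hi', hieq⟩ := hdecomp i h1 hi
        exact Or.inr ⟨b, i', hb, hi', hieq, by rw [hieq]; exact hblock b i' hi'⟩
    have hjeq : ∀ (j₁ j₂ : ℤ) (c₁ c₂ : ℕ), j₁.natAbs ≤ k → j₂.natAbs ≤ k →
        j₁ • a + F c₁ = j₂ • a + F c₂ → j₁ = j₂ ∧ F c₁ = F c₂ := by
      intro j₁ j₂ c₁ c₂ hj₁ hj₂ heq
      have h1 : (j₁ - j₂) • a = F c₂ - F c₁ := by
        have h2 : j₁ • a = j₂ • a + F c₂ - F c₁ := by rw [← heq]; abel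
        rw [sub_smul, h2]; abel
      have h3 : (j₁ - j₂) • a ∈ H := h1 ▸ sub_mem (hFH c₂) (hFH c₁)
      have h4 : (m : ℤ) ∣ (j₁ - j₂) := (hdvd _).mp h3
      have h5 : (j₁ - j₂).natAbs < m := by
        have := Int.natAbs_sub_le j₁ j₂
        omega
      have h6 : j₁ = j₂ := by
        have := int_eq_zero_of_dvd_of_natAbs_lt h4 h5
        omega
      subst h6
      exact ⟨rfl, by exact add_left_cancel heq⟩
    have habs : ∀ (b : ℕ) (i' : ℕ), b < k →
        (if i' % 2 = 0 then ((b : ℤ) + 1) else -((b : ℤ) + 1)).natAbs ≤ k := by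
      intro b i' hb
      split <;> omega
    have hF0inj : ∀ i₁, i₁ < n → ∀ i₂, i₂ < n → F0 i₁ = F0 i₂ → i₁ = i₂ := by
      intro i₁ h₁ i₂ h₂ heq
      rcases hcases i₁ h₁ with ⟨hi₁, e₁⟩ | ⟨b₁, i₁', hb₁, hi₁', rfl, e₁⟩ <;>
        rcases hcases i₂ h₂ with ⟨hi₂, e₂⟩ | ⟨b₂, i₂', hb₂, hi₂', rfl, e₂⟩
      · exact hinj _ hi₁ _ hi₂ (by rw [← e₁, ← e₂, heq])
      · exfalso
        have h7 := hjeq 0 _ i₁ i₂' (by simp) (habs b₂ i₂' hb₂)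
          (by rw [zero_zsmul, zero_add, ← e₁, ← e₂, heq])
        have := h7.1
        split at this <;> omega
      · exfalso
        have h7 := hjeq _ 0 i₁' i₂ (habs b₁ i₁' hb₁) (by simp)
          (by rw [zero_zsmul, zero_add, ← e₁, ← e₂, heq])
        have := h7.1
        split at this <;> omega
      · obtain ⟨hj, hFc⟩ := hjeq _ _ i₁' i₂' (habs b₁ i₁' hb₁) (habs b₂ i₂' hb₂)
          (by rw [← e₁, ← e₂, heq])
        have hbb : b₁ = b₂ ∧ i₁' % 2 = i₂' % 2 := by
          split at hj <;> split at hj <;> omega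
        obtain ⟨hb12, hpar⟩ := hbb
        have hcc : i₁' % t = i₂' % t :=
          hinj _ (Nat.mod_lt _ ht) _ (Nat.mod_lt _ ht) (by rw [← hmod, ← hmod, hFc])
        have hsplit : ∀ i' : ℕ, i' < 2 * t → i' = i' % t ∨ i' = i' % t + t := by
          intro i' hi'
          rcases lt_or_ge i' t with h | h
          · left; rw [Nat.mod_eq_of_lt h]
          · right
            rw [Nat.mod_eq_sub_mod h, Nat.mod_eq_of_lt (by omega)]
            omega
        have hii : i₁' = i₂' := by
          have hto : t % 2 = 1 := Nat.odd_iff.mp hoddt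
          rcases hsplit i₁' hi₁' with hA | hA <;> rcases hsplit i₂' hi₂' with hB | hB <;> omega
        rw [hb12, hii]
    have hKW : ∀ g ∈ K, ∃ j : ℤ, g - j • a ∈ H := by
      have hW : K ≤ {
          carrier := {x | ∃ j : ℤ, x - j • a ∈ H}
          zero_mem' := ⟨0, by simpa using zero_mem H⟩
          add_mem' := by
            rintro x y ⟨j₁, hj₁⟩ ⟨j₂, hj₂⟩
            refine ⟨j₁ + j₂, ?_⟩
            have h1 : x + y - (j₁ + j₂) • a = (x - j₁ • a) + (y - j₂ • a) := by
              rw [add_smul]; abel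
            rw [h1]; exact add_mem hj₁ hj₂
          neg_mem' := by
            rintro x ⟨j, hj⟩
            refine ⟨-j, ?_⟩
            have h1 : -x - (-j) • a = -(x - j • a) := by rw [neg_smul]; abel
            rw [h1]; exact neg_mem hj } := by
        rw [hKdef]
        refine sup_le (fun x hx => ⟨0, by simpa using hx⟩) ((closure_le _).mpr ?_)
        rintro x rfl
        exact ⟨1, by simpa using zero_mem H⟩
      exact fun g hg => hW hg
    have hmem' : ∀ g, g ∈ K ↔ ∃ i < n, F0 i = g := by
      intro g
      constructor
      · intro hg
        obtain ⟨j, hj⟩ := hKW g hg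
        set j₀ : ℤ := if j % (m : ℤ) ≤ (k : ℤ) then j % (m : ℤ) else j % (m : ℤ) - m with hj₀
        have hjm1 : 0 ≤ j % (m : ℤ) := Int.emod_nonneg j (by positivity)
        have hjm2 : j % (m : ℤ) < m := Int.emod_lt_of_pos j (by positivity)
        have hmk : (m : ℤ) = 2 * k + 1 := by rw [hk]; push_cast; ring
        have hdvd0 : (m : ℤ) ∣ (j - j₀) := by
          have h1 : (m : ℤ) ∣ (j - j % (m : ℤ)) := Int.dvd_self_sub_of_emod_eq rfl
          rw [hj₀]
          split
          · exact h1
          · have h2 : j - (j % (m : ℤ) - m) = (j - j % (m : ℤ)) + m := by ring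
            rw [h2]
            exact dvd_add h1 dvd_rfl
        have hj₀range : -(k : ℤ) ≤ j₀ ∧ j₀ ≤ k := by
          constructor <;> (rw [hj₀]; split <;> omega)
        have hgH : g - j₀ • a ∈ H := by
          have h5 : (j - j₀) • a ∈ H := (hdvd _).mpr hdvd0
          have h6 : g - j₀ • a = (g - j • a) + (j - j₀) • a := by rw [sub_smul]; abel
          rw [h6]; exact add_mem hj h5
        obtain ⟨c, hcc, hFc⟩ := (hmem _).mp hgH
        rcases lt_trichotomy j₀ 0 with hneg | hzero | hpos
        · set b : ℕ := (-j₀).toNat - 1 with hb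
          have hbk : b < k := by omega
          have hb' : ((b : ℤ) + 1) = -j₀ := by omega
          set i' : ℕ := if c % 2 = 1 then c else c + t with hi'
          have hi'lt : i' < 2 * t := by rw [hi']; split <;> omega
          have hi'par : i' % 2 = 1 := by
            have hto : t % 2 = 1 := Nat.odd_iff.mp hoddt
            rw [hi']; split <;> omega
          have hFi' : F i' = F c := by
            rw [hi']; split
            · rfl
            · exact hper c
          refine ⟨t + 2 * t * b + i', ?_, ?_⟩
          · have h8 : 2 * t * (b + 1) ≤ 2 * t * k := Nat.mul_le_mul_left _ (by omega)
            have h9 : 2 * t * (b + 1) = 2 * t * b + 2 * t := by ring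
            omega
          · rw [hblock b i' hi'lt, if_neg (by omega), hFi', hFc,
              show -((b : ℤ) + 1) = j₀ by omega]
            abel
        · refine ⟨c, by omega, ?_⟩
          rw [hlow c hcc, hFc, hzero]
          simp
        · set b : ℕ := j₀.toNat - 1 with hb
          have hbk : b < k := by omega
          have hb' : ((b : ℤ) + 1) = j₀ := by omega
          set i' : ℕ := if c % 2 = 0 then c else c + t with hi'
          have hi'lt : i' < 2 * t := by rw [hi']; split <;> omega
          have hi'par : i' % 2 = 0 := by
            have hto : t % 2 = 1 := Nat.odd_iff.mp hoddt
            rw [hi']; split <;> omega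
          have hFi' : F i' = F c := by
            rw [hi']; split
            · rfl
            · exact hper c
          refine ⟨t + 2 * t * b + i', ?_, ?_⟩
          · have h8 : 2 * t * (b + 1) ≤ 2 * t * k := Nat.mul_le_mul_left _ (by omega)
            have h9 : 2 * t * (b + 1) = 2 * t * b + 2 * t := by ring
            omega
          · rw [hblock b i' hi'lt, if_pos hi'par, hFi', hFc, hb']
            abel
      · rintro ⟨i, hi, rfl⟩
        rcases hcases i hi with ⟨hi', e⟩ | ⟨b, i', hb, hi', hieq, e⟩
        · rw [e]; exact hHK (hFH i)
        · rw [e]; exact add_mem (zsmul_mem haK _) (hHK (hFH i'))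
    have hFt : F t = F 0 := by simpa using hper 0
    set S' : Finset G := insert (a + sstar) (insert ((-(k : ℤ)) • a + sstar) S) with hS'
    have hSS' : S ⊆ S' := fun x hx => by simp [hS', hx]
    have hsums : ∀ i, i < n → F0 i + F0 ((i + 1) % n) ∈ S' := by
      intro i hi
      rcases lt_or_ge (i + 1) t with hA | hA
      · rw [Nat.mod_eq_of_lt (by omega), hlow i (by omega), hlow (i + 1) hA]
        exact hSS' (hsum i)
      rcases eq_or_lt_of_le hA with hB | hB
      · have hi0 : i < t := by omega
        have h1 : (i + 1) % n = t := by rw [← hB, Nat.mod_eq_of_lt (by omega)]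
        have h2 : F0 t = ((0 : ℤ) + 1) • a + F 0 := by
          have := hblock 0 0 (by omega)
          simpa using this
        rw [h1, hlow i hi0, h2, show i = t - 1 by omega]
        have h3 : F (t - 1) + (((0 : ℤ) + 1) • a + F 0) = a + sstar := by
          rw [hsstar, hFt, show ((0 : ℤ) + 1) = 1 by ring, one_zsmul]; abel
        rw [h3]
        simp [hS']
      · obtain ⟨b, i', hb, hi', rfl⟩ := hdecomp i (by omega) hi
        have hei := hblock b i' hi'
        rcases lt_or_ge (i' + 1) (2 * t) with hC | hC
        · have hlt : t + 2 * t * b + i' + 1 < n := by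
            have h8 : 2 * t * (b + 1) ≤ 2 * t * k := Nat.mul_le_mul_left _ (by omega)
            have h9 : 2 * t * (b + 1) = 2 * t * b + 2 * t := by ring
            omega
          have hidx : t + 2 * t * b + i' + 1 = t + 2 * t * b + (i' + 1) := by omega
          rw [Nat.mod_eq_of_lt hlt, hidx, hblock b (i' + 1) hC, hei]
          rcases Nat.mod_two_eq_zero_or_one i' with hp | hp
          · have hp1 : (i' + 1) % 2 = 1 := by omega
            rw [if_pos hp, if_neg (by omega)]
            have h4 : (((b : ℤ) + 1) • a + F i') + (-((b : ℤ) + 1) • a + F (i' + 1)) =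
                F i' + F (i' + 1) := by
              rw [neg_smul]; abel
            rw [h4]; exact hSS' (hsum i')
          · have hp1 : (i' + 1) % 2 = 0 := by omega
            rw [if_neg (by omega), if_pos hp1]
            have h4 : (-((b : ℤ) + 1) • a + F i') + (((b : ℤ) + 1) • a + F (i' + 1)) =
                F i' + F (i' + 1) := by
              rw [neg_smul]; abel
            rw [h4]; exact hSS' (hsum i')
        · have hC' : i' + 1 = 2 * t := by omega
          have hp : i' % 2 = 1 := by omega
          have hFi' : F i' = F (t - 1) := by
            rw [show i' = (t - 1) + t by omega, hper]
          rcases lt_or_ge (b + 1) k with hD | hD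
          · have hidx : t + 2 * t * b + i' + 1 = t + 2 * t * (b + 1) + 0 := by
              have h9 : 2 * t * (b + 1) = 2 * t * b + 2 * t := by ring
              omega
            have hlt : t + 2 * t * (b + 1) + 0 < n := by
              have h8 : 2 * t * (b + 2) ≤ 2 * t * k := Nat.mul_le_mul_left _ (by omega)
              have h9 : 2 * t * (b + 2) = 2 * t * (b + 1) + 2 * t := by ring
              omega
            rw [show (t + 2 * t * b + i' + 1) % n = t + 2 * t * (b + 1) + 0 by
                rw [hidx, Nat.mod_eq_of_lt hlt],
              hblock (b + 1) 0 (by omega), hei, if_neg (by omega), if_pos (by omega)]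
            have hval : (-((b : ℤ) + 1)) • a + F i' + ((((b + 1 : ℕ) : ℤ) + 1) • a + F 0) =
                a + sstar := by
              rw [hFi', hsstar, hFt]
              push_cast
              rw [show ((b : ℤ) + 1 + 1) = ((b : ℤ) + 1) + 1 by ring, add_smul, one_zsmul, neg_smul]
              abel
            rw [hval]
            simp [hS']
          · have hD' : b + 1 = k := by omega
            have hend : t + 2 * t * b + i' + 1 = n := by
              have h9 : 2 * t * (b + 1) = 2 * t * b + 2 * t := by ring
              have h10 : 2 * t * (b + 1) = 2 * t * k := by rw [hD']
              omega
            rw [show (t + 2 * t * b + i' + 1) % n = 0 by rw [hend, Nat.mod_self],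
              hlow 0 ht, hei, if_neg (by omega)]
            have hcast : ((b : ℤ) + 1) = (k : ℤ) := by
              exact_mod_cast congrArg (fun x : ℕ => (x : ℤ)) hD'
            have hval : (-((b : ℤ) + 1)) • a + F i' + F 0 = (-(k : ℤ)) • a + sstar := by
              rw [hFi', hsstar, hFt, hcast]; abel
            rw [hval]
            simp [hS']
    -- assemble
    have hn2 : 2 ≤ n := by omega
    refine ⟨n, fun i => F0 (i % n), S', ⟨?_, ?_, ?_, ?_, ?_⟩, ?_⟩
    · rw [hn]; exact (Odd.mul (by rw [hk]; exact ⟨k, rfl⟩) hoddt)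
    · intro i
      dsimp only
      rw [Nat.add_mod_right]
    · intro i hi j hj hij
      dsimp only at hij
      rw [Nat.mod_eq_of_lt hi, Nat.mod_eq_of_lt hj] at hij
      exact hF0inj i hi j hj hij
    · intro g
      rw [hmem' g]
      constructor
      · rintro ⟨i, hi, he⟩
        exact ⟨i, hi, by dsimp only; rwa [Nat.mod_eq_of_lt hi]⟩
      · rintro ⟨i, hi, he⟩
        dsimp only at he
        exact ⟨i, hi, by rwa [Nat.mod_eq_of_lt hi] at he⟩
    · intro i
      dsimp only
      have h1 : (i + 1) % n = (i % n + 1) % n := by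
        conv_lhs => rw [Nat.add_mod, Nat.mod_eq_of_lt (show 1 < n by omega)]
      rw [h1]
      exact hsums (i % n) (Nat.mod_lt _ (by omega))
    · calc S'.card ≤ (insert ((-(k : ℤ)) • a + sstar) S).card + 1 := Finset.card_insert_le _ _
        _ ≤ S.card + 1 + 1 := by
            have := Finset.card_insert_le ((-(k : ℤ)) • a + sstar) S
            omega
        _ = S.card + 2 := by ring

lemma exists_cycFun (hodd : Odd (Fintype.card G)) :
    ∀ (r : ℕ) (A : Finset G), A.card ≤ r →
      ∃ t F S, CycFun (closure (A : Set G)) t F S ∧ S.card ≤ 2 * r + 1 := by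
  intro r
  induction r with
  | zero =>
    intro A hA
    have hA0 : A = ∅ := Finset.card_eq_zero.mp (le_antisymm hA (Nat.zero_le _))
    subst hA0
    refine ⟨1, fun _ => 0, {0}, ⟨odd_one, fun _ => rfl, ?_, ?_, ?_⟩, by simp⟩
    · intro i hi j hj _; omega
    · intro g
      rw [Finset.coe_empty, AddSubgroup.closure_empty, AddSubgroup.mem_bot]
      constructor
      · rintro rfl; exact ⟨0, by omega, rfl⟩
      · rintro ⟨i, _, rfl⟩; rfl
    · intro i; simp
  | succ r ih =>
    intro A hA
    rcases le_or_gt A.card r with h | h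
    · obtain ⟨t, F, S, hc, hS⟩ := ih A h
      exact ⟨t, F, S, hc, by omega⟩
    · have hne : A.Nonempty := Finset.card_pos.mp (by omega)
      obtain ⟨a, ha⟩ := hne
      obtain ⟨t, F, S, hc, hS⟩ := ih (A.erase a)
        (by rw [Finset.card_erase_of_mem ha]; omega)
      obtain ⟨t', F', S', hc', hS'⟩ := cyc_step hodd hc a
      have hcl : closure (A : Set G) =
          closure ((A.erase a : Finset G) : Set G) ⊔ closure {a} := by
        conv_lhs => rw [← Finset.insert_erase ha]
        rw [Finset.coe_insert, Set.insert_eq, AddSubgroup.closure_union, sup_comm]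
      exact ⟨t', F', S', hcl ▸ hc', by omega⟩

lemma exists_good_ham_s15 [Nontrivial G] (hodd : Odd (Fintype.card G)) :
    ∃ σ : Equiv.Perm G, (σ.IsCycle ∧ σ.support = Finset.univ) ∧
      (Finset.image (fun g => g + σ g) Finset.univ).card ≤ 2 * addRank G + 1 := by
  classical
  have hex : addRank G ∈ {n : ℕ | ∃ S : Finset G, S.card = n ∧ closure (S : Set G) = ⊤} :=
    Nat.sInf_mem ⟨Finset.univ.card, Finset.univ, rfl, by
      rw [Finset.coe_univ]; exact closure_univ⟩
  obtain ⟨A, hAcard, hAtop⟩ := hex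
  obtain ⟨t, F, S, hc, hS⟩ := exists_cycFun hodd (addRank G) A (le_of_eq hAcard)
  rw [hAtop] at hc
  obtain ⟨hoddt, hper, hinj, hmem, hsum⟩ := hc
  have hbij : Function.Bijective (fun i : Fin t => F i.1) := by
    constructor
    · intro i j hij
      exact Fin.ext (hinj i.1 i.2 j.1 j.2 hij)
    · intro g
      obtain ⟨i, hi, he⟩ := (hmem g).mp (AddSubgroup.mem_top g)
      exact ⟨⟨i, hi⟩, he⟩
  set e : Fin t ≃ G := Equiv.ofBijective _ hbij with he
  have ht2 : t = Fintype.card G := by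
    rw [← Fintype.card_fin t]; exact Fintype.card_congr e
  have hcard2 : 2 ≤ t := by
    rw [ht2]; exact Fintype.one_lt_card
  obtain ⟨p, hp⟩ : ∃ p, t = p + 2 := ⟨t - 2, by omega⟩
  subst hp
  set σ : Equiv.Perm G := e.permCongr (finRotate (p + 2)) with hσ
  have happ : ∀ g, σ g = e (finRotate (p + 2) (e.symm g)) := fun g => rfl
  have hmodF : ∀ j, F j = F (j % (p + 2)) := per_mod (by omega) hper
  -- conjugation is a monoid hom
  have hzpow : ∀ (z : ℤ) (π : Equiv.Perm (Fin (p + 2))),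
      e.permCongr (π ^ z) = (e.permCongr π) ^ z := by
    have hφ : ∀ π₁ π₂ : Equiv.Perm (Fin (p + 2)),
        e.permCongr (π₁ * π₂) = e.permCongr π₁ * e.permCongr π₂ := by
      intro π₁ π₂; ext x
      simp [Equiv.permCongr_apply, Equiv.Perm.mul_apply]
    let φ : Equiv.Perm (Fin (p + 2)) →* Equiv.Perm G :=
      { toFun := fun π => e.permCongr π
        map_one' := by ext x; simp
        map_mul' := hφ }
    exact fun z π => map_zpow φ π z
  have hmoves : ∀ g : G, σ g ≠ g := by
    intro g hgg
    have h1 : finRotate (p + 2) (e.symm g) = e.symm g := by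
      apply e.injective
      rw [← happ g, hgg]
      exact (e.apply_symm_apply g).symm
    have h2 : finRotate (p + 2) (e.symm g) ≠ e.symm g :=
      Equiv.Perm.mem_support.mp (by rw [support_finRotate]; exact Finset.mem_univ _)
    exact h2 h1
  have hsupp : σ.support = Finset.univ := by
    ext g
    simp [Equiv.Perm.mem_support, hmoves g]
  have hcyc : σ.IsCycle := by
    obtain ⟨x, hx, hsc⟩ := isCycle_finRotate (n := p)
    refine ⟨e x, ?_, ?_⟩
    · intro h
      apply hx
      have h2 := happ (e x)
      rw [Equiv.symm_apply_apply] at h2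
      rw [h2] at h
      exact e.injective h
    · intro y hy
      have hy' : finRotate (p + 2) (e.symm y) ≠ e.symm y := by
        intro h
        exact hy (by rw [happ y, h, Equiv.apply_symm_apply])
      obtain ⟨z, hz⟩ := hsc hy'
      refine ⟨z, ?_⟩
      rw [hσ, ← hzpow]
      show e ((finRotate (p + 2) ^ z) (e.symm (e x))) = y
      rw [Equiv.symm_apply_apply, hz, Equiv.apply_symm_apply]
  have hsub : Finset.image (fun g => g + σ g) Finset.univ ⊆ S := by
    intro x hx
    obtain ⟨g, -, rfl⟩ := Finset.mem_image.mp hx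
    set i : Fin (p + 2) := e.symm g with hi
    have hg : g = F i.1 := (e.apply_symm_apply g).symm
    have hσg : σ g = F ((i.1 + 1) % (p + 2)) := by
      rw [happ g, ← hi, finRotate_succ_apply]
      show F ((i + 1 : Fin (p + 2)).1) = _
      rw [Fin.val_add, Fin.val_one]
    rw [hσg, hg, ← hmodF (i.1 + 1)]
    exact hsum i.1
  exact ⟨σ, ⟨hcyc, hsupp⟩, le_trans (Finset.card_le_card hsub) hS⟩

end Aux

theorem stmt15 (G : Type*) [AddCommGroup G] [Fintype G] [DecidableEq G] [Nontrivial G]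
    (hodd : Odd (Fintype.card G)) :
    addRank G + 1 ≤
        sInf {k : ℕ | ∃ σ : Equiv.Perm G, IsHamCycle σ ∧ (cycleSums σ).card = k} ∧
      sInf {k : ℕ | ∃ σ : Equiv.Perm G, IsHamCycle σ ∧ (cycleSums σ).card = k}
        ≤ 2 * addRank G + 1 := by
  classical
  obtain ⟨σ₀, hham₀, hcard₀⟩ := exists_good_ham_s15 hodd
  have hTne : {k : ℕ | ∃ σ : Equiv.Perm G, IsHamCycle σ ∧ (cycleSums σ).card = k}.Nonempty :=
    ⟨(cycleSums σ₀).card, σ₀, hham₀, rfl⟩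
  constructor
  · obtain ⟨σ₁, hham₁, hk⟩ := Nat.sInf_mem hTne
    rw [← hk]
    exact lower_bound hodd hham₁.1 hham₁.2
  · exact le_trans (Nat.sInf_le ⟨σ₀, hham₀, rfl⟩) hcard₀
end

section
/- Let G be a finite cyclic group with |G| ≥ 3, and let smin(G) denote the minimum of |S(C)| over all Hamiltonian cycles C on G. Then smin(G) = 2 if |G| is even, and smin(G) = 3 if |G| is odd. -/
section
set_option linter.unusedSectionVars false
set_option linter.unusedTactic false
variable {G : Type*} [AddCommGroup G] [Fintype G] [DecidableEq G]

lemma my_zsmul_iff (g : G) {n : ℕ} (hg : addOrderOf g = n) (a b : ℤ) :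
    a • g = b • g ↔ (n : ℤ) ∣ a - b := by
  rw [← sub_eq_zero, sub_eq_add_neg, ← sub_zsmul, ← addOrderOf_dvd_iff_zsmul_eq_zero, hg]

lemma ham_of_seq (g : G) (e : ℕ → ℤ) (h3 : 3 ≤ Fintype.card G)
    (hg : addOrderOf g = Fintype.card G)
    (hinj : ∀ j < Fintype.card G, ∀ j' < Fintype.card G,
      ((Fintype.card G : ℤ)) ∣ e j - e j' → j = j') :
    ∃ σ : Equiv.Perm G, IsHamCycle σ ∧
      cycleSums σ = (Finset.range (Fintype.card G)).image
        (fun i => (e i + e ((i + 1) % Fintype.card G)) • g) := by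
  set n := Fintype.card G with hn
  set L : List G := (List.range n).map (fun j => e j • g) with hL
  have hlen : L.length = n := by simp [hL]
  have hnodup : L.Nodup := by
    refine List.Nodup.map_on ?_ List.nodup_range
    intro x hx y hy hxy
    rw [List.mem_range] at hx hy
    exact hinj x hx y hy ((my_zsmul_iff g hg _ _).mp hxy)
  have huniv : L.toFinset = Finset.univ := by
    apply Finset.eq_univ_of_card
    rw [List.toFinset_card_of_nodup hnodup, hlen]
  have hne : ∀ x : G, L ≠ [x] := by
    intro x hx
    have := congrArg List.length hx
    rw [hlen] at this
    simp at this
    omega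
  refine ⟨L.formPerm, ⟨List.isCycle_formPerm hnodup (by omega), ?_⟩, ?_⟩
  · rw [List.support_formPerm_of_nodup L hnodup hne, huniv]
  · have happ : ∀ i < n, L.formPerm (e i • g) = e ((i + 1) % n) • g := by
      intro i hi
      have h1 : i < L.length := by omega
      have := List.formPerm_apply_getElem L hnodup i h1
      simpa [hL, hlen] using this
    ext x
    simp only [cycleSums, Finset.mem_image, Finset.mem_univ, true_and, Finset.mem_range]
    constructor
    · rintro ⟨y, rfl⟩
      have hyL : y ∈ L := List.mem_toFinset.mp (huniv ▸ Finset.mem_univ y)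
      obtain ⟨i, hi, rfl⟩ := List.mem_iff_getElem.mp hyL
      have hi' : i < n := by omega
      have hgi : L[i] = e i • g := by simp [hL]
      refine ⟨i, hi', ?_⟩
      rw [hgi, happ i hi', add_zsmul]
    · rintro ⟨i, hi, rfl⟩
      exact ⟨e i • g, by rw [happ i hi, ← add_zsmul]⟩
lemma exists_card_two (g : G) (h3 : 3 ≤ Fintype.card G)
    (hg : addOrderOf g = Fintype.card G) (hev : Even (Fintype.card G)) :
    ∃ σ : Equiv.Perm G, IsHamCycle σ ∧ (cycleSums σ).card = 2 := by
  set n := Fintype.card G with hn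
  have h2n : (2 : ℤ) ∣ (n : ℤ) := by
    rw [Nat.even_iff] at hev; omega
  set e : ℕ → ℤ := fun j => if Even j then (j : ℤ) else 2 - j with he
  have hinj : ∀ j < n, ∀ j' < n, ((n : ℤ)) ∣ e j - e j' → j = j' := by
    intro j hj j' hj' hd
    rcases Nat.even_or_odd j with hje | hjo <;> rcases Nat.even_or_odd j' with hje' | hjo'
    · simp only [he, if_pos hje, if_pos hje'] at hd
      have := Int.eq_zero_of_abs_lt_dvd hd (by rw [abs_lt]; omega)
      omega
    · simp only [he, if_pos hje, if_neg (Nat.not_even_iff_odd.mpr hjo')] at hd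
      have h2 := h2n.trans hd
      rw [Nat.even_iff] at hje; rw [Nat.odd_iff] at hjo'
      omega
    · simp only [he, if_neg (Nat.not_even_iff_odd.mpr hjo), if_pos hje'] at hd
      have h2 := h2n.trans hd
      rw [Nat.even_iff] at hje'; rw [Nat.odd_iff] at hjo
      omega
    · simp only [he, if_neg (Nat.not_even_iff_odd.mpr hjo),
        if_neg (Nat.not_even_iff_odd.mpr hjo')] at hd
      have := Int.eq_zero_of_abs_lt_dvd hd (by rw [abs_lt]; omega)
      omega
  obtain ⟨σ, hham, hsums⟩ := ham_of_seq g e h3 hg hinj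
  have hval : (Finset.range n).image (fun i => (e i + e ((i + 1) % n)) • g)
      = {(1 : ℤ) • g, (3 : ℤ) • g} := by
    ext x
    simp only [Finset.mem_image, Finset.mem_range, Finset.mem_insert, Finset.mem_singleton]
    constructor
    · rintro ⟨i, hi, rfl⟩
      rcases eq_or_lt_of_le (Nat.succ_le_of_lt hi) with hlast | hmid
      · right
        have hio : Odd i := by
          rw [Nat.odd_iff]; rw [Nat.even_iff] at hev; omega
        have h0 : (i + 1) % n = 0 := by rw [← hlast, Nat.mod_self]
        have he1 : e i = 2 - i := by
          simp [he, Nat.not_even_iff_odd.mpr hio]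
        have he2 : e ((i + 1) % n) = 0 := by simp [h0, he]
        rw [he1, he2]
        rw [my_zsmul_iff g hg]
        have : (2 : ℤ) - i + 0 - 3 = -n := by push_cast; omega
        rw [this]
        exact dvd_neg.mpr dvd_rfl
      · have hmod : (i + 1) % n = i + 1 := Nat.mod_eq_of_lt hmid
        rcases Nat.even_or_odd i with hie | hio
        · left
          have hno : ¬ Even (i + 1) := by simp [Nat.even_add_one, hie]
          have : e i + e ((i + 1) % n) = 1 := by
            rw [hmod]
            simp only [he, if_pos hie, if_neg hno]
            push_cast; omega
          rw [this]
        · right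
          have hyes : Even (i + 1) := by simp [Nat.even_add_one, Nat.not_even_iff_odd.mpr hio]
          have : e i + e ((i + 1) % n) = 3 := by
            rw [hmod]
            simp only [he, if_neg (Nat.not_even_iff_odd.mpr hio), if_pos hyes]
            push_cast; omega
          rw [this]
    · intro hx
      rcases hx with rfl | rfl
      · refine ⟨0, by omega, ?_⟩
        have h1 : (0 + 1) % n = 1 := Nat.mod_eq_of_lt (by omega)
        rw [h1]
        norm_num [he]
      · refine ⟨1, by omega, ?_⟩
        have h1 : (1 + 1) % n = 2 := Nat.mod_eq_of_lt (by omega)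
        rw [h1]
        norm_num [he]
  refine ⟨σ, hham, ?_⟩
  rw [hsums, hval, Finset.card_insert_of_notMem, Finset.card_singleton]
  rw [Finset.mem_singleton, my_zsmul_iff g hg]
  intro hdvd
  have := Int.eq_zero_of_abs_lt_dvd hdvd (by rw [abs_lt]; omega)
  omega
lemma exists_card_three (g : G) (h3 : 3 ≤ Fintype.card G)
    (hg : addOrderOf g = Fintype.card G) (hodd : Odd (Fintype.card G)) :
    ∃ σ : Equiv.Perm G, IsHamCycle σ ∧ (cycleSums σ).card = 3 := by
  set n := Fintype.card G with hn
  have hno : n % 2 = 1 := Nat.odd_iff.mp hodd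
  set e : ℕ → ℤ := fun j => if Even j then -((j / 2 : ℕ) : ℤ) else ((j + 1) / 2 : ℕ) with he
  have hinj : ∀ j < n, ∀ j' < n, ((n : ℤ)) ∣ e j - e j' → j = j' := by
    intro j hj j' hj' hd
    rcases Nat.even_or_odd j with hje | hjo <;> rcases Nat.even_or_odd j' with hje' | hjo'
    · simp only [he, if_pos hje, if_pos hje'] at hd
      have := Int.eq_zero_of_abs_lt_dvd hd (by rw [abs_lt]; omega)
      rw [Nat.even_iff] at hje hje'
      omega
    · simp only [he, if_pos hje, if_neg (Nat.not_even_iff_odd.mpr hjo')] at hd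
      rw [Nat.even_iff] at hje
      rw [Nat.odd_iff] at hjo'
      have := Int.eq_zero_of_abs_lt_dvd hd (by rw [abs_lt]; omega)
      omega
    · simp only [he, if_neg (Nat.not_even_iff_odd.mpr hjo), if_pos hje'] at hd
      rw [Nat.even_iff] at hje'
      rw [Nat.odd_iff] at hjo
      have := Int.eq_zero_of_abs_lt_dvd hd (by rw [abs_lt]; omega)
      omega
    · simp only [he, if_neg (Nat.not_even_iff_odd.mpr hjo),
        if_neg (Nat.not_even_iff_odd.mpr hjo')] at hd
      rw [Nat.odd_iff] at hjo hjo'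
      have := Int.eq_zero_of_abs_lt_dvd hd (by rw [abs_lt]; omega)
      omega
  obtain ⟨σ, hham, hsums⟩ := ham_of_seq g e h3 hg hinj
  set mI : ℤ := (((n - 1) / 2 : ℕ) : ℤ) with hm
  have hval : (Finset.range n).image (fun i => (e i + e ((i + 1) % n)) • g)
      = {(1 : ℤ) • g, (0 : ℤ) • g, (-mI) • g} := by
    ext x
    simp only [Finset.mem_image, Finset.mem_range, Finset.mem_insert, Finset.mem_singleton]
    constructor
    · rintro ⟨i, hi, rfl⟩
      rcases eq_or_lt_of_le (Nat.succ_le_of_lt hi) with hlast | hmid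
      · right; right
        have hie : Even i := by rw [Nat.even_iff]; omega
        have h0 : (i + 1) % n = 0 := by rw [← hlast, Nat.mod_self]
        have he1 : e i = -mI := by
          simp only [he, if_pos hie, hm]
          congr 1
          omega
        have he2 : e ((i + 1) % n) = 0 := by simp [h0, he]
        rw [he1, he2, add_zero]
      · have hmod : (i + 1) % n = i + 1 := Nat.mod_eq_of_lt hmid
        rcases Nat.even_or_odd i with hie | hio
        · left
          have hn1 : ¬ Even (i + 1) := by simp [Nat.even_add_one, hie]
          have : e i + e ((i + 1) % n) = 1 := by
            rw [hmod]
            simp only [he, if_pos hie, if_neg hn1]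
            rw [Nat.even_iff] at hie
            omega
          rw [this]
        · right; left
          have hy : Even (i + 1) := by simp [Nat.even_add_one, Nat.not_even_iff_odd.mpr hio]
          have : e i + e ((i + 1) % n) = 0 := by
            rw [hmod]
            simp only [he, if_neg (Nat.not_even_iff_odd.mpr hio), if_pos hy]
            omega
          rw [this]
    · intro hx
      rcases hx with rfl | rfl | rfl
      · refine ⟨0, by omega, ?_⟩
        have h1 : (0 + 1) % n = 1 := Nat.mod_eq_of_lt (by omega)
        rw [h1]
        norm_num [he]
      · refine ⟨1, by omega, ?_⟩
        have h1 : (1 + 1) % n = 2 := Nat.mod_eq_of_lt (by omega)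
        rw [h1]
        have h2 : ¬ Even 1 := by decide
        have h3' : Even 2 := by decide
        simp only [he, if_neg h2, if_pos h3']
        norm_num
      · refine ⟨n - 1, by omega, ?_⟩
        have h1 : (n - 1 + 1) % n = 0 := by
          have : n - 1 + 1 = n := by omega
          rw [this, Nat.mod_self]
        rw [h1]
        have hie : Even (n - 1) := by rw [Nat.even_iff]; omega
        simp only [he, if_pos hie, if_pos (by decide : Even 0)]
        rw [hm]
        push_cast
        norm_num
  refine ⟨σ, hham, ?_⟩
  have hd1 : ¬ ((n : ℤ) ∣ 1 - 0) := by
    intro hdvd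
    have := Int.eq_zero_of_abs_lt_dvd hdvd (by rw [abs_lt]; omega)
    omega
  have hd2 : ¬ ((n : ℤ) ∣ 1 - -mI) := by
    intro hdvd
    have := Int.eq_zero_of_abs_lt_dvd hdvd (by rw [abs_lt, hm]; push_cast; omega)
    rw [hm] at this
    omega
  have hd3 : ¬ ((n : ℤ) ∣ 0 - -mI) := by
    intro hdvd
    have := Int.eq_zero_of_abs_lt_dvd hdvd (by rw [abs_lt, hm]; push_cast; omega)
    rw [hm] at this
    omega
  rw [hsums, hval]
  rw [Finset.card_insert_of_notMem, Finset.card_insert_of_notMem, Finset.card_singleton]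
  · rw [Finset.mem_singleton, my_zsmul_iff g hg]
    exact hd3
  · simp only [Finset.mem_insert, Finset.mem_singleton, my_zsmul_iff g hg]
    push_neg
    exact ⟨hd1, hd2⟩
lemma hamOrder (σ : Equiv.Perm G) (hσ : IsHamCycle σ) : orderOf σ = Fintype.card G := by
  rw [hσ.1.orderOf, hσ.2, Finset.card_univ]

lemma two_le_card (h3 : 3 ≤ Fintype.card G) (σ : Equiv.Perm G) (hσ : IsHamCycle σ) :
    2 ≤ (cycleSums σ).card := by
  have hne : Nonempty G := Fintype.card_pos_iff.mp (by omega)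
  have hnonempty : (cycleSums σ).Nonempty := Finset.univ_nonempty.image _
  rcases Nat.lt_or_ge (cycleSums σ).card 2 with hlt | hge
  · exfalso
    interval_cases h : (cycleSums σ).card
    · exact Finset.nonempty_iff_ne_empty.mp hnonempty (Finset.card_eq_zero.mp h)
    · obtain ⟨a, ha⟩ := Finset.card_eq_one.mp h
      have hall : ∀ x : G, x + σ x = a := by
        intro x
        have hx : x + σ x ∈ cycleSums σ := Finset.mem_image_of_mem _ (Finset.mem_univ x)
        rw [ha, Finset.mem_singleton] at hx
        exact hx
      have hsq : σ ^ 2 = 1 := by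
        ext x
        simp only [pow_two, Equiv.Perm.mul_apply, Equiv.Perm.one_apply]
        have h1 := hall x
        have h2 := hall (σ x)
        have : σ x + σ (σ x) = σ x + x := by rw [h2, ← h1, add_comm]
        exact add_left_cancel this
      have := Nat.le_of_dvd (by omega) (orderOf_dvd_of_pow_eq_one hsq)
      rw [hamOrder σ hσ] at this
      omega
  · exact hge

lemma three_le_card (h3 : 3 ≤ Fintype.card G) (hodd : Odd (Fintype.card G))
    (σ : Equiv.Perm G) (hσ : IsHamCycle σ) : 3 ≤ (cycleSums σ).card := by
  rcases Nat.lt_or_ge (cycleSums σ).card 3 with hlt | hge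
  · exfalso
    have h2 := two_le_card h3 σ hσ
    have hc2 : (cycleSums σ).card = 2 := by omega
    obtain ⟨a, b, hab, hset⟩ := Finset.card_eq_two.mp hc2
    have hall : ∀ x : G, x + σ x = a ∨ x + σ x = b := by
      intro x
      have hx : x + σ x ∈ cycleSums σ := Finset.mem_image_of_mem _ (Finset.mem_univ x)
      rw [hset] at hx
      simpa using hx
    have hfix : ∀ y : G, σ y ≠ y := by
      intro y
      have : y ∈ σ.support := hσ.2 ▸ Finset.mem_univ y
      exact Equiv.Perm.mem_support.mp this
    set x₀ : G := ((Fintype.card G + 1) / 2) • a with hx₀def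
    have hx₀ : x₀ + x₀ = a := by
      rw [hx₀def, ← add_nsmul]
      have hsum : (Fintype.card G + 1) / 2 + (Fintype.card G + 1) / 2
          = Fintype.card G + 1 := by
        rw [Nat.odd_iff] at hodd; omega
      rw [hsum, add_nsmul, card_nsmul_eq_zero, zero_add, one_nsmul]
    have h1 : x₀ + σ x₀ = b := by
      rcases hall x₀ with h | h
      · exfalso
        apply hfix x₀
        have : x₀ + σ x₀ = x₀ + x₀ := h.trans hx₀.symm
        exact add_left_cancel this
      · exact h
    have h2' : σ⁻¹ x₀ + x₀ = b := by
      have hinv := hall (σ⁻¹ x₀)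
      rw [Equiv.Perm.coe_inv, Equiv.apply_symm_apply] at hinv
      rcases hinv with h | h
      · exfalso
        apply hfix x₀
        have heq : σ⁻¹ x₀ + x₀ = x₀ + x₀ := h.trans hx₀.symm
        have : σ⁻¹ x₀ = x₀ := add_right_cancel heq
        calc σ x₀ = σ (σ⁻¹ x₀) := by rw [this]
        _ = x₀ := Equiv.apply_symm_apply σ x₀
      · exact h
    have h4 : σ⁻¹ x₀ = σ x₀ := by
      have heq : σ⁻¹ x₀ + x₀ = σ x₀ + x₀ := by
        rw [h2', add_comm (σ x₀) x₀, h1]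
      exact add_right_cancel heq
    have h5 : (σ ^ 2) x₀ = x₀ := by
      rw [pow_two, Equiv.Perm.mul_apply, ← h4, Equiv.Perm.coe_inv, Equiv.apply_symm_apply]
    have hcop : Nat.Coprime 2 (orderOf σ) := by
      rw [hamOrder σ hσ]
      rw [Nat.odd_iff] at hodd
      exact (Nat.prime_two.coprime_iff_not_dvd).mpr (by omega)
    have hsupp2 : (σ ^ 2).support = Finset.univ := by
      rw [Equiv.Perm.support_pow_coprime hcop, hσ.2]
    exact Equiv.Perm.mem_support.mp (hsupp2 ▸ Finset.mem_univ x₀) h5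
  · exact hge
end
theorem stmt16 (G : Type*) [AddCommGroup G] [Fintype G] [DecidableEq G] [IsAddCyclic G]
    (h3 : 3 ≤ Fintype.card G) :
    (Even (Fintype.card G) →
      sInf {k : ℕ | ∃ σ : Equiv.Perm G, IsHamCycle σ ∧ (cycleSums σ).card = k} = 2) ∧
    (Odd (Fintype.card G) →
      sInf {k : ℕ | ∃ σ : Equiv.Perm G, IsHamCycle σ ∧ (cycleSums σ).card = k} = 3) := by
  obtain ⟨g, hgsur⟩ := IsAddCyclic.exists_zsmul_surjective (G := G)
  have hg : addOrderOf g = Fintype.card G := by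
    rw [← Nat.card_eq_fintype_card]
    apply addOrderOf_eq_card_of_forall_mem_zmultiples
    intro x
    obtain ⟨k, hk⟩ := hgsur x
    exact AddSubgroup.mem_zmultiples_iff.mpr ⟨k, hk⟩
  constructor
  · intro hev
    obtain ⟨σ, hσ, hc⟩ := exists_card_two g h3 hg hev
    have h2mem : 2 ∈ {k : ℕ | ∃ σ : Equiv.Perm G, IsHamCycle σ ∧ (cycleSums σ).card = k} :=
      ⟨σ, hσ, hc⟩
    have hle := Nat.sInf_le h2mem
    obtain ⟨τ, hτ, hcτ⟩ := Nat.sInf_mem (Set.nonempty_of_mem h2mem)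
    have := two_le_card h3 τ hτ
    omega
  · intro hodd
    obtain ⟨σ, hσ, hc⟩ := exists_card_three g h3 hg hodd
    have h3mem : 3 ∈ {k : ℕ | ∃ σ : Equiv.Perm G, IsHamCycle σ ∧ (cycleSums σ).card = k} :=
      ⟨σ, hσ, hc⟩
    have hle := Nat.sInf_le h3mem
    obtain ⟨τ, hτ, hcτ⟩ := Nat.sInf_mem (Set.nonempty_of_mem h3mem)
    have := three_le_card h3 hodd τ hτ
    omega
end

section
/- Let G be a finite abelian group with Σ(G) ≠ 0 and n = |G| (so n ≥ 2 and n is even). Then G possesses a rainbow-sum Hamiltonian path: there is an enumeration g₁, g₂, …, g_n of all elements of G (each element appearing exactly once) such that the n − 1 sums g₁ + g₂, g₂ + g₃, …, g_{n−1} + g_n are pairwise distinct. -/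
/-- Rainbow path property, phrased via an indexing function. -/
def HasRP (G : Type*) [AddCommMonoid G] : Prop :=
  ∃ g : ℕ → G,
    (∀ i j, i < Nat.card G → j < Nat.card G → g i = g j → i = j) ∧
    (∀ i j, i + 1 < Nat.card G → j + 1 < Nat.card G →
      g i + g (i + 1) = g j + g (j + 1) → i = j)


/-- Rainbow path property, phrased via an indexing function. -/
theorem sum_univ_add_sum_univ (G : Type*) [AddCommGroup G] [Fintype G] :
    (∑ x : G, x) + (∑ x : G, x) = 0 := by
  have h : (∑ x : G, x) = ∑ x : G, -x :=
    Fintype.sum_equiv (Equiv.neg G) _ _ (fun x => (neg_neg x).symm)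
  nth_rewrite 2 [h]
  rw [Finset.sum_neg_distrib, add_neg_cancel]

theorem sum_univ_eq_zero_of_odd (G : Type*) [AddCommGroup G] [Fintype G]
    (h : Odd (Fintype.card G)) : (∑ x : G, x) = 0 := by
  obtain ⟨m, hm⟩ := h
  have h1 : Fintype.card G • (∑ x : G, x) = 0 := card_nsmul_eq_zero
  have h2 : (2 * m) • (∑ x : G, x) = 0 := by
    rw [mul_nsmul]
    rw [show (2 : ℕ) • (∑ x : G, x) = (∑ x : G, x) + (∑ x : G, x) from two_nsmul _,
      sum_univ_add_sum_univ, smul_zero]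
  have h3 : Fintype.card G • (∑ x : G, x) = (2 * m) • (∑ x : G, x) + (∑ x : G, x) := by
    rw [hm, succ_nsmul]
  rw [h1, h2, zero_add] at h3
  exact h3.symm

theorem hasRP_of_subsingleton (G : Type*) [AddCommMonoid G] [Subsingleton G] : HasRP G := by
  refine ⟨fun _ => 0, ?_, ?_⟩ <;>
  · intro i j hi hj _
    have := Nat.card_of_subsingleton (0 : G)
    omega

theorem HasRP.congr {G H : Type*} [AddCommMonoid G] [AddCommMonoid H] (e : G ≃+ H)
    (h : HasRP G) : HasRP H := by
  obtain ⟨g, h1, h2⟩ := h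
  have hc : Nat.card H = Nat.card G := Nat.card_congr e.toEquiv.symm
  refine ⟨fun i => e (g i), ?_, ?_⟩
  · intro i j hi hj hij
    rw [hc] at hi hj
    exact h1 i j hi hj (e.injective hij)
  · intro i j hi hj hij
    rw [hc] at hi hj
    rw [← map_add, ← map_add] at hij
    exact h2 i j hi hj (e.injective hij)

theorem double_inj_of_odd (B : Type*) [AddCommGroup B] [Fintype B]
    (h : Odd (Fintype.card B)) : ∀ x y : B, x + x = y + y → x = y := by
  intro x y hxy
  have h2 : (2 : ℕ) • (x - y) = 0 := by
    rw [two_nsmul, show x - y + (x - y) = (x + x) - (y + y) by abel, hxy, sub_self]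
  have hdvd : addOrderOf (x - y) ∣ 2 := addOrderOf_dvd_of_nsmul_eq_zero h2
  have hdvd2 : addOrderOf (x - y) ∣ Fintype.card B := addOrderOf_dvd_card
  have hd : addOrderOf (x - y) ∣ Nat.gcd 2 (Fintype.card B) := Nat.dvd_gcd hdvd hdvd2
  have hg : Nat.gcd 2 (Fintype.card B) = 1 := Nat.coprime_two_left.mpr h
  rw [hg, Nat.dvd_one, AddMonoid.addOrderOf_eq_one_iff, sub_eq_zero] at hd
  exact hd



theorem miss_lemma {A : Type*} [AddCommGroup A] [Fintype A] (g : ℕ → A)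
    (h1 : ∀ i j, i < Fintype.card A → j < Fintype.card A → g i = g j → i = j)
    (h2 : ∀ i j, i + 1 < Fintype.card A → j + 1 < Fintype.card A →
      g i + g (i + 1) = g j + g (j + 1) → i = j)
    (i : ℕ) (hi : i + 1 < Fintype.card A) :
    g i + g (i + 1) ≠ g 0 + g (Fintype.card A - 1) + ∑ x : A, x := by
  classical
  set n := Fintype.card A with hn
  have hn1 : 1 ≤ n := Fintype.card_pos
  intro hμ
  set s : ℕ → A := fun i => g i + g (i + 1) with hs
  set S : Finset A := (Finset.range (n - 1)).image s with hS
  have hinj : Set.InjOn s (Finset.range (n - 1)) := by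
    intro a ha b hb hab
    simp only [Finset.coe_range, Set.mem_Iio] at ha hb
    exact h2 a b (by omega) (by omega) hab
  have hcardS : S.card = n - 1 := by
    rw [hS, Finset.card_image_of_injOn hinj, Finset.card_range]
  have hcardC : (Finset.univ \ S).card = 1 := by
    rw [Finset.card_sdiff_of_subset (Finset.subset_univ S), Finset.card_univ, ← hn, hcardS]; omega
  obtain ⟨x, hx⟩ := Finset.card_eq_one.mp hcardC
  have hginj : Set.InjOn g (Finset.range n) := by
    intro a ha b hb hab
    simp only [Finset.coe_range, Set.mem_Iio] at ha hb
    exact h1 a b ha hb hab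
  have huniv : (Finset.range n).image g = Finset.univ := by
    apply Finset.eq_univ_of_card
    rw [Finset.card_image_of_injOn hginj, Finset.card_range, hn]
  have hT : ∑ x : A, x = ∑ i ∈ Finset.range n, g i := by
    rw [← huniv, Finset.sum_image (fun a ha b hb hab => hginj ha hb hab)]
  have hr1 : ∑ j ∈ Finset.range (n - 1), g j = (∑ j ∈ Finset.range n, g j) - g (n - 1) := by
    have : n = (n - 1) + 1 := by omega
    rw [this]
    rw [Finset.sum_range_succ]
    simp
  have hr2 : ∑ j ∈ Finset.range (n - 1), g (j + 1) = (∑ j ∈ Finset.range n, g j) - g 0 := by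
    have : n = (n - 1) + 1 := by omega
    rw [this, Finset.sum_range_succ']
    simp
  have hsum_S : ∑ y ∈ S, y
      = (∑ j ∈ Finset.range n, g j) + (∑ j ∈ Finset.range n, g j) - g (n - 1) - g 0 := by
    rw [hS, Finset.sum_image (fun a ha b hb hab => hinj ha hb hab)]
    rw [hs]
    rw [Finset.sum_add_distrib, hr1, hr2]
    abel
  have hsplit : (∑ y ∈ Finset.univ \ S, y) + ∑ y ∈ S, y = ∑ x : A, x :=
    Finset.sum_sdiff (Finset.subset_univ S)
  have hxval : x = g 0 + g (n - 1) + ∑ x : A, x := by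
    have h1' : ∑ y ∈ Finset.univ \ S, y = x := by rw [hx, Finset.sum_singleton]
    rw [h1', hsum_S, hT] at hsplit
    have hTT := sum_univ_add_sum_univ A
    rw [hT] at hTT
    rw [hT]
    calc x = (∑ j ∈ Finset.range n, g j)
          - ((∑ j ∈ Finset.range n, g j) + (∑ j ∈ Finset.range n, g j) - g (n - 1) - g 0) :=
        eq_sub_of_add_eq hsplit
      _ = g 0 + g (n - 1) + (∑ j ∈ Finset.range n, g j)
          - ((∑ j ∈ Finset.range n, g j) + (∑ j ∈ Finset.range n, g j)) := by abel
      _ = g 0 + g (n - 1) + (∑ j ∈ Finset.range n, g j) := by rw [hTT, sub_zero]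
  have hxnot : x ∉ S := by
    have hmem : x ∈ Finset.univ \ S := by rw [hx]; exact Finset.mem_singleton_self x
    exact (Finset.mem_sdiff.mp hmem).2
  apply hxnot
  rw [hxval, ← hμ]
  exact Finset.mem_image.mpr ⟨i, Finset.mem_range.mpr (by omega), rfl⟩

theorem HasRP.prod {A B : Type*} [AddCommGroup A] [AddCommGroup B] [Fintype A] [Fintype B]
    (ha : HasRP A) (hb : HasRP B) (hB : ∀ x y : B, x + x = y + y → x = y) :
    HasRP (A × B) := by
  obtain ⟨ga, ha1, ha2⟩ := ha
  obtain ⟨gb, hb1, hb2⟩ := hb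
  rw [Nat.card_eq_fintype_card] at ha1 ha2 hb1 hb2
  set q := Fintype.card A with hqdef
  set k := Fintype.card B with hkdef
  have hq : 0 < q := Fintype.card_pos
  have hk : 0 < k := Fintype.card_pos
  have hcard : Nat.card (A × B) = q * k := by
    rw [Nat.card_eq_fintype_card, Fintype.card_prod]
  set e : A := ∑ x : A, x with hedef
  have hee : e + e = 0 := sum_univ_add_sum_univ A
  have hsm : ∀ j : ℕ, (j • e) + (j • e) = 0 := by
    intro j
    rw [← smul_add, hee, smul_zero]
  set g : ℕ → A × B := fun m => (ga (m % q) + (m / q) • e, gb (m / q)) with hgdef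
  have hdivlt : ∀ m, m < q * k → m / q < k := by
    intro m hm
    exact Nat.div_lt_of_lt_mul hm
  -- key sum computation
  have key : ∀ m, m + 1 < q * k →
      g m + g (m + 1) = if m % q = q - 1
        then (ga 0 + ga (q - 1) + e, gb (m / q) + gb (m / q + 1))
        else (ga (m % q) + ga (m % q + 1), gb (m / q) + gb (m / q)) := by
    intro m hm
    have hdm := Nat.div_add_mod m q
    by_cases hbd : m % q = q - 1
    · have hm1 : m + 1 = q * (m / q + 1) := by rw [Nat.mul_succ]; omega
      have hdiv : (m + 1) / q = m / q + 1 := by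
        rw [hm1, Nat.mul_div_cancel_left _ hq]
      have hmod : (m + 1) % q = 0 := by rw [hm1, Nat.mul_mod_right]
      rw [if_pos hbd]
      simp only [hgdef, Prod.mk_add_mk]
      rw [hdiv, hmod, hbd]
      refine Prod.ext ?_ rfl
      show ga (q-1) + (m / q) • e + (ga 0 + (m / q + 1) • e) = ga 0 + ga (q - 1) + e
      have hstep : (m / q) • e + (m / q + 1) • e = e := by
        rw [succ_nsmul, ← add_assoc, hsm, zero_add]
      calc ga (q-1) + (m / q) • e + (ga 0 + (m / q + 1) • e)
          = ga 0 + ga (q - 1) + ((m / q) • e + (m / q + 1) • e) := by abel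
        _ = ga 0 + ga (q - 1) + e := by rw [hstep]
    · have hlt : m % q + 1 < q := by have := Nat.mod_lt m hq; omega
      have hm1 : m + 1 = q * (m / q) + (m % q + 1) := by omega
      have hdiv : (m + 1) / q = m / q := by
        rw [hm1, Nat.mul_add_div hq, Nat.div_eq_of_lt hlt, add_zero]
      have hmod : (m + 1) % q = m % q + 1 := by
        rw [hm1, Nat.mul_add_mod, Nat.mod_eq_of_lt hlt]
      rw [if_neg hbd]
      simp only [hgdef, Prod.mk_add_mk]
      rw [hdiv, hmod]
      refine Prod.ext ?_ rfl
      show ga (m % q) + (m / q) • e + (ga (m % q + 1) + (m / q) • e)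
          = ga (m % q) + ga (m % q + 1)
      calc ga (m % q) + (m / q) • e + (ga (m % q + 1) + (m / q) • e)
          = ga (m % q) + ga (m % q + 1) + ((m / q) • e + (m / q) • e) := by abel
        _ = _ := by rw [hsm, add_zero]
  refine ⟨g, ?_, ?_⟩
  · -- injectivity
    intro m m' hm hm' heq
    rw [hcard] at hm hm'
    have h2 : gb (m / q) = gb (m' / q) := congrArg Prod.snd heq
    have hj : m / q = m' / q := hb1 _ _ (hdivlt m hm) (hdivlt m' hm') h2
    have h1 : ga (m % q) + (m / q) • e = ga (m' % q) + (m' / q) • e := congrArg Prod.fst heq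
    rw [hj] at h1
    have := ha1 (m % q) (m' % q) (Nat.mod_lt m hq) (Nat.mod_lt m' hq)
      (add_right_cancel h1)
    have hdm := Nat.div_add_mod m q
    have hdm' := Nat.div_add_mod m' q
    have hqq : q * (m / q) = q * (m' / q) := by rw [hj]
    omega
  · -- sum injectivity
    intro m m' hm hm' heq
    rw [hcard] at hm hm'
    rw [key m hm, key m' hm'] at heq
    have hμ := miss_lemma ga ha1 ha2
    by_cases h1 : m % q = q - 1 <;> by_cases h2 : m' % q = q - 1
    · rw [if_pos h1, if_pos h2] at heq
      have hsnd : gb (m / q) + gb (m / q + 1) = gb (m' / q) + gb (m' / q + 1) :=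
        congrArg Prod.snd heq
      have hdm := Nat.div_add_mod m q
      have hdm' := Nat.div_add_mod m' q
      have hjlt : m / q + 1 < k := by
        have h5 : m + 1 = q * (m / q + 1) := by rw [Nat.mul_succ]; omega
        exact Nat.lt_of_mul_lt_mul_left (a := q) (by omega)
      have hjlt' : m' / q + 1 < k := by
        have h5 : m' + 1 = q * (m' / q + 1) := by rw [Nat.mul_succ]; omega
        exact Nat.lt_of_mul_lt_mul_left (a := q) (by omega)
      have hj := hb2 _ _ hjlt hjlt' hsnd
      have hqq : q * (m / q) = q * (m' / q) := by rw [show m / q = m' / q by omega]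
      omega
    · exfalso
      rw [if_pos h1, if_neg h2] at heq
      have hfst : ga 0 + ga (q - 1) + e = ga (m' % q) + ga (m' % q + 1) :=
        congrArg Prod.fst heq
      have hlt : m' % q + 1 < q := by have := Nat.mod_lt m' hq; omega
      exact hμ (m' % q) hlt hfst.symm
    · exfalso
      rw [if_neg h1, if_pos h2] at heq
      have hfst : ga (m % q) + ga (m % q + 1) = ga 0 + ga (q - 1) + e :=
        congrArg Prod.fst heq
      have hlt : m % q + 1 < q := by have := Nat.mod_lt m hq; omega
      exact hμ (m % q) hlt hfst
    · rw [if_neg h1, if_neg h2] at heq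
      have hfst : ga (m % q) + ga (m % q + 1) = ga (m' % q) + ga (m' % q + 1) :=
        congrArg Prod.fst heq
      have hlt : m % q + 1 < q := by have := Nat.mod_lt m hq; omega
      have hlt' : m' % q + 1 < q := by have := Nat.mod_lt m' hq; omega
      have hmodeq := ha2 _ _ hlt hlt' hfst
      have hsnd : gb (m / q) + gb (m / q) = gb (m' / q) + gb (m' / q) :=
        congrArg Prod.snd heq
      have hgb : gb (m / q) = gb (m' / q) := hB _ _ hsnd
      have hj : m / q = m' / q := hb1 _ _ (hdivlt m (by omega)) (hdivlt m' (by omega)) hgb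
      have hdm := Nat.div_add_mod m q
      have hdm' := Nat.div_add_mod m' q
      have hqq : q * (m / q) = q * (m' / q) := by rw [hj]
      omega

theorem hasRP_zmod (n : ℕ) (hn : 0 < n) : HasRP (ZMod n) := by
  haveI : NeZero n := ⟨hn.ne'⟩
  have hcard : Nat.card (ZMod n) = n := by
    rw [Nat.card_eq_fintype_card, ZMod.card]
  rcases Nat.even_or_odd n with he | ho
  · obtain ⟨c, hc⟩ := he
    refine ⟨fun i => ((if i % 2 = 0 then i / 2 else i / 2 + c : ℕ) : ZMod n), ?_, ?_⟩
    · intro i j hi hj hij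
      rw [hcard] at hi hj
      have ha : (if i % 2 = 0 then i / 2 else i / 2 + c) < n := by split_ifs <;> omega
      have hb : (if j % 2 = 0 then j / 2 else j / 2 + c) < n := by split_ifs <;> omega
      rw [ZMod.natCast_eq_natCast_iff, Nat.ModEq,
        Nat.mod_eq_of_lt ha, Nat.mod_eq_of_lt hb] at hij
      split_ifs at hij <;> omega
    · intro i j hi hj hij
      rw [hcard] at hi hj
      have e1 : ∀ m : ℕ, ((if m % 2 = 0 then m / 2 else m / 2 + c : ℕ) : ZMod n)
          + ((if (m + 1) % 2 = 0 then (m + 1) / 2 else (m + 1) / 2 + c : ℕ) : ZMod n)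
          = ((m + c : ℕ) : ZMod n) := by
        intro m
        rw [← Nat.cast_add]
        congr 1
        split_ifs <;> omega
      rw [e1 i, e1 j, ZMod.natCast_eq_natCast_iff] at hij
      have h2 : i ≡ j [MOD n] := Nat.ModEq.add_right_cancel' c hij
      rw [Nat.ModEq, Nat.mod_eq_of_lt (by omega), Nat.mod_eq_of_lt (by omega)] at h2
      exact h2
  · refine ⟨fun i => (i : ZMod n), ?_, ?_⟩
    · intro i j hi hj hij
      rw [hcard] at hi hj
      rw [ZMod.natCast_eq_natCast_iff, Nat.ModEq,
        Nat.mod_eq_of_lt hi, Nat.mod_eq_of_lt hj] at hij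
      exact hij
    · intro i j hi hj hij
      rw [hcard] at hi hj
      have e1 : ∀ m : ℕ, ((m : ℕ) : ZMod n) + ((m + 1 : ℕ) : ZMod n)
          = ((2 * m + 1 : ℕ) : ZMod n) := by
        intro m; push_cast; ring
      rw [e1 i, e1 j, ZMod.natCast_eq_natCast_iff] at hij
      have h2 : 2 * i ≡ 2 * j [MOD n] := Nat.ModEq.add_right_cancel' 1 hij
      have h3 : i ≡ j [MOD n] := h2.cancel_left_of_coprime (Nat.coprime_two_left.mpr ho).symm
      rw [Nat.ModEq, Nat.mod_eq_of_lt (by omega), Nat.mod_eq_of_lt (by omega)] at h3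
      exact h3

theorem zip_map_range {G : Type*} [Add G] (n : ℕ) (g : ℕ → G) :
    ((List.range n).map g).zipWith (· + ·) ((List.range n).map g).tail
      = (List.range (n - 1)).map (fun i => g i + g (i + 1)) := by
  cases n with
  | zero => rfl
  | succ m =>
    have htail : ((List.range (m + 1)).map g).tail
        = (List.range m).map (fun i => g (i + 1)) := by
      rw [List.range_succ_eq_map]
      simp [List.map_map, Function.comp]
    rw [htail]
    have hfirst : (List.range (m + 1)).map g = (List.range m).map g ++ [g m] := by
      rw [List.range_succ, List.map_append, List.map_singleton]
    rw [hfirst]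
    have : (List.range m).map (fun i => g (i + 1))
        = (List.range m).map (fun i => g (i + 1)) ++ [] := by simp
    rw [this, List.zipWith_append (by simp), List.zipWith_nil_right, List.append_nil]
    rw [List.zipWith_map, List.zipWith_self]
    simp

theorem hasRP_list {G : Type*} [AddCommMonoid G] [Fintype G] [DecidableEq G] (h : HasRP G) :
    ∃ l : List G, l.Nodup ∧ (∀ g : G, g ∈ l) ∧ (l.zipWith (· + ·) l.tail).Nodup := by
  obtain ⟨g, h1, h2⟩ := h
  rw [Nat.card_eq_fintype_card] at h1 h2
  set n := Fintype.card G with hn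
  refine ⟨(List.range n).map g, ?_, ?_, ?_⟩
  · apply List.Nodup.map_on _ List.nodup_range
    intro x hx y hy hxy
    exact h1 x y (List.mem_range.mp hx) (List.mem_range.mp hy) hxy
  · intro x
    have hnodup : ((List.range n).map g).Nodup := by
      apply List.Nodup.map_on _ List.nodup_range
      intro a ha b hb hab
      exact h1 a b (List.mem_range.mp ha) (List.mem_range.mp hb) hab
    have hcard : ((List.range n).map g).toFinset = Finset.univ := by
      apply Finset.eq_univ_of_card
      rw [List.toFinset_card_of_nodup hnodup, List.length_map, List.length_range]
    rw [← List.mem_toFinset, hcard]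
    exact Finset.mem_univ x
  · rw [zip_map_range]
    apply List.Nodup.map_on _ List.nodup_range
    intro x hx y hy hxy
    exact h2 x y (by have := List.mem_range.mp hx; omega)
      (by have := List.mem_range.mp hy; omega) hxy

/-- Reindexing equivalence for dependent products, as an `AddEquiv`. -/
def myPiCongr {α β : Type*} (e : α ≃ β) (M : β → Type*) [∀ b, AddCommMonoid (M b)] :
    (∀ a, M (e a)) ≃+ ∀ b, M b :=
  { Equiv.piCongrLeft M e with
    map_add' := fun f g => by
      funext b
      obtain ⟨a, rfl⟩ := e.surjective b
      show (Equiv.piCongrLeft M e) (f + g) (e a)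
        = ((Equiv.piCongrLeft M e) f) (e a) + ((Equiv.piCongrLeft M e) g) (e a)
      rw [Equiv.piCongrLeft_apply_apply, Equiv.piCongrLeft_apply_apply,
        Equiv.piCongrLeft_apply_apply, Pi.add_apply] }

/-- Splitting off the `none` factor of a dependent product over `Option α`. -/
def myPiOption {α : Type*} (M : Option α → Type*) [∀ i, AddCommMonoid (M i)] :
    (∀ i, M i) ≃+ M none × (∀ a, M (some a)) :=
  { Equiv.piOptionEquivProd with map_add' := fun f g => rfl }

theorem hasRP_pi (ι : Type) [Finite ι] (n : ι → ℕ) (hpos : ∀ i, 0 < n i)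
    (heven : ∀ i j, Even (n i) → Even (n j) → i = j) : HasRP (∀ i, ZMod (n i)) := by
  revert n
  refine Finite.induction_empty_option
    (P := fun γ => ∀ n : γ → ℕ, (∀ i, 0 < n i) →
      (∀ i j, Even (n i) → Even (n j) → i = j) → HasRP (∀ i, ZMod (n i)))
    ?_ ?_ ?_ ι
  · intro α β e IH n hpos heven
    have h := IH (fun a => n (e a)) (fun a => hpos _)
      (fun i j hi hj => e.injective (heven _ _ hi hj))
    exact h.congr (myPiCongr e (fun b => ZMod (n b)))
  · intro n _ _
    exact hasRP_of_subsingleton _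
  · intro α hfin IH n hpos heven
    haveI : DecidableEq α := Classical.decEq α
    haveI : ∀ i : Option α, NeZero (n i) := fun i => ⟨(hpos i).ne'⟩
    let E1 : (∀ i : Option α, ZMod (n i)) ≃+ ZMod (n none) × ∀ a : α, ZMod (n (some a)) :=
      myPiOption _
    by_cases hev : Even (n none)
    · have hodd : ∀ a : α, Odd (n (some a)) := by
        intro a
        rw [← Nat.not_even_iff_odd]
        intro h
        exact Option.some_ne_none a (heven (some a) none h hev)
      have hBodd : Odd (Fintype.card (∀ a : α, ZMod (n (some a)))) := by
        rw [Fintype.card_pi]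
        refine Finset.prod_induction _ Odd (fun a b => Odd.mul) odd_one ?_
        intro a _
        rw [ZMod.card]
        exact hodd a
      have hA : HasRP (ZMod (n none)) := hasRP_zmod _ (hpos none)
      have hB : HasRP (∀ a : α, ZMod (n (some a))) :=
        IH (fun a => n (some a)) (fun a => hpos _)
          (fun i j hi hj => Option.some.inj (heven _ _ hi hj))
      exact (HasRP.prod hA hB (double_inj_of_odd _ hBodd)).congr E1.symm
    · have hA : HasRP (∀ a : α, ZMod (n (some a))) :=
        IH (fun a => n (some a)) (fun a => hpos _)
          (fun i j hi hj => Option.some.inj (heven _ _ hi hj))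
      have hB : HasRP (ZMod (n none)) := hasRP_zmod _ (hpos none)
      have hBodd : Odd (Fintype.card (ZMod (n none))) := by
        rw [ZMod.card]
        exact Nat.not_even_iff_odd.mp hev
      have hprod := HasRP.prod hA hB (double_inj_of_odd _ hBodd)
      exact (hprod.congr (AddEquiv.prodComm)).congr E1.symm

theorem stmt18 (G : Type*) [AddCommGroup G] [Fintype G]
    (hsum : (∑ g : G, g) ≠ 0) :
    ∃ l : List G, l.Nodup ∧ (∀ g : G, g ∈ l) ∧ (l.zipWith (· + ·) l.tail).Nodup := by
  classical
  obtain ⟨ι, hι, n, hlt, ⟨e⟩⟩ := AddCommGroup.equiv_directSum_zmod_of_finite' G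
  haveI := hι
  haveI : ∀ i, NeZero (n i) := fun i => ⟨by have := hlt i; omega⟩
  let φ : G ≃+ ∀ i, ZMod (n i) := e.trans (DirectSum.addEquivProd _)
  have heven : ∀ i j, Even (n i) → Even (n j) → i = j := by
    by_contra hcon
    push_neg at hcon
    obtain ⟨i, j, hei, hej, hij⟩ := hcon
    apply hsum
    have hPi : (∑ f : (∀ i, ZMod (n i)), f) = 0 := by
      funext k
      rw [Finset.sum_apply]
      have hsplit : (∑ f : (∀ i, ZMod (n i)), f k)
          = ∑ p : (ZMod (n k) × ∀ j : {j // j ≠ k}, ZMod (n j)), p.1 :=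
        Fintype.sum_equiv (Equiv.piSplitAt k (fun j => ZMod (n j))) _ _ (fun f => rfl)
      rw [hsplit, Fintype.sum_prod_type]
      have : ∀ a : ZMod (n k),
          (∑ _p : (∀ j : {j // j ≠ k}, ZMod (n j)), a)
            = Fintype.card (∀ j : {j // j ≠ k}, ZMod (n j)) • a := by
        intro a
        rw [Finset.sum_const, Finset.card_univ]
      simp_rw [this]
      rw [← Finset.smul_sum]
      by_cases hk : Even (n k)
      · -- the other even factor lies in the subtype
        have hne : (if i = k then j else i) ≠ k := by
          split_ifs with h
          · subst h; exact fun hc => hij (hc ▸ rfl)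
          · exact h
        have hev2 : Even (n (if i = k then j else i)) := by
          split_ifs
          · exact hej
          · exact hei
        have hdvd : 2 ∣ Fintype.card (∀ j : {j // j ≠ k}, ZMod (n j)) := by
          rw [Fintype.card_pi]
          refine dvd_trans hev2.two_dvd ?_
          have : (⟨_, hne⟩ : {j // j ≠ k}) ∈ Finset.univ := Finset.mem_univ _
          calc (n (if i = k then j else i))
              = Fintype.card (ZMod (n ((⟨_, hne⟩ : {j // j ≠ k}) : ι))) := by rw [ZMod.card]
            _ ∣ ∏ j : {j // j ≠ k}, Fintype.card (ZMod (n j)) :=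
              Finset.dvd_prod_of_mem _ this
        obtain ⟨t, ht⟩ := hdvd
        rw [ht, mul_comm, mul_smul]
        rw [show (2 : ℕ) • (∑ a : ZMod (n k), a)
            = (∑ a : ZMod (n k), a) + (∑ a : ZMod (n k), a) from two_nsmul _,
          sum_univ_add_sum_univ, smul_zero]
        rfl
      · rw [sum_univ_eq_zero_of_odd _ (by rw [ZMod.card]; exact Nat.not_even_iff_odd.mp hk),
          smul_zero]
        rfl
    have h1 : φ (∑ g : G, g) = ∑ g : G, φ g := map_sum φ _ _
    have h2 : ∑ g : G, φ g = ∑ f : (∀ i, ZMod (n i)), f :=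
      Fintype.sum_bijective φ φ.bijective _ _ (fun x => rfl)
    have : φ (∑ g : G, g) = 0 := by rw [h1, h2, hPi]
    exact (AddEquiv.map_eq_zero_iff φ).mp this
  have hrp : HasRP (∀ i, ZMod (n i)) :=
    hasRP_pi ι n (fun i => by have := hlt i; omega) heven
  exact hasRP_list (hrp.congr φ.symm)
end
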